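/- arXiv:0905.2787 — 13 statements merged into one kernel-verified Lean document; each statement's English description precedes it below -/
import Mathlib

section
/- For all real t with 0 < t < 1, one has π/2 − (1/2)·ln((1+t)^{1−t}/(1−t)^{1+t}) < E(t) < (π−1)/2 + ((1−t²)/(4t))·ln((1+t)/(1−t)). -/
/-!
Bound the integrand pointwise by polynomials in `u = t² sin² θ`: below by `1 - u ≤ √(1 - u)`,
above by the Taylor polynomial of `√(1 - u)` of degree 4, which overestimates because all later
Taylor coefficients are negative. Wallis' reduction formula integrates these polynomials exactly.
The lower bound then only needs `log (1 + t) ≥ 0` and `log (1 - t) ≤ -t`; the upper bound needs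
the first two terms `2t + 2t³/3` of the series of `log ((1 + t) / (1 - t))` and `π > 3.14`.
-/

open Real

noncomputable def completeEllipticE (t : ℝ) : ℝ :=
  ∫ θ in (0:ℝ)..π / 2, √(1 - t ^ 2 * sin θ ^ 2)

lemma integral_sin_pow_add_two_zero_pi_div_two (n : ℕ) :
    ∫ x in (0:ℝ)..π / 2, sin x ^ (n + 2) = (n + 1) / (n + 2) * ∫ x in (0:ℝ)..π / 2, sin x ^ n := by
  simp [integral_sin_pow]

lemma integral_quartic_sin_sq_zero_pi_div_two (a b c d e : ℝ) :
    ∫ x in (0:ℝ)..π / 2, (a + b * sin x ^ 2 + c * sin x ^ 4 + d * sin x ^ 6 + e * sin x ^ 8) =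
      π / 2 * (a + b / 2 + 3 * c / 8 + 5 * d / 16 + 35 * e / 128) := by
  have h2 := integral_sin_pow_add_two_zero_pi_div_two 0
  have h4 := integral_sin_pow_add_two_zero_pi_div_two 2
  have h6 := integral_sin_pow_add_two_zero_pi_div_two 4
  have h8 := integral_sin_pow_add_two_zero_pi_div_two 6
  norm_num at h2 h4 h6 h8
  rw [intervalIntegral.integral_add, intervalIntegral.integral_add, intervalIntegral.integral_add,
    intervalIntegral.integral_add]
  · simp [h2, h4, h6, h8]
    ring
  all_goals apply Continuous.intervalIntegrable; fun_prop

lemma sqrt_one_sub_le_taylor {u : ℝ} (h0 : 0 ≤ u) (h1 : u ≤ 1) :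
    √(1 - u) ≤ 1 - u / 2 - u ^ 2 / 8 - u ^ 3 / 16 - 5 * u ^ 4 / 128 := by
  have h2 : u ^ 2 ≤ u := by nlinarith
  have h3 : u ^ 3 ≤ u := by nlinarith
  have h4 : u ^ 4 ≤ u := by nlinarith
  rw [sqrt_le_left (by linarith)]
  nlinarith [pow_nonneg h0 5, pow_nonneg h0 6, pow_nonneg h0 7, pow_nonneg h0 8]

section EllipticBounds

variable {t : ℝ}

lemma sq_mul_sin_sq_mem_Icc (ht : |t| ≤ 1) (θ : ℝ) : t ^ 2 * sin θ ^ 2 ∈ Set.Icc 0 1 :=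
  ⟨by positivity, mul_le_one₀ (sq_le_one_iff_abs_le_one t |>.2 ht) (by positivity) (sin_sq_le_one θ)⟩

lemma pi_div_two_mul_one_sub_sq_div_two_le_completeEllipticE (ht : |t| ≤ 1) :
    π / 2 * (1 - t ^ 2 / 2) ≤ completeEllipticE t := by
  have h := integral_quartic_sin_sq_zero_pi_div_two 1 (-t ^ 2) 0 0 0
  simp only [zero_mul, add_zero, neg_mul, ← sub_eq_add_neg] at h
  calc π / 2 * (1 - t ^ 2 / 2) = ∫ θ in (0:ℝ)..π / 2, (1 - t ^ 2 * sin θ ^ 2) := by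
        rw [h]; ring
    _ ≤ completeEllipticE t := by
      refine intervalIntegral.integral_mono_on (by positivity) ?_ ?_ fun θ _ => ?_
      · apply Continuous.intervalIntegrable; fun_prop
      · apply Continuous.intervalIntegrable; fun_prop
      exact le_sqrt_self_iff.2 (by linarith [(sq_mul_sin_sq_mem_Icc ht θ).1])

lemma completeEllipticE_le_pi_div_two_mul_taylor (ht : |t| ≤ 1) :
    completeEllipticE t ≤
      π / 2 * (1 - t ^ 2 / 4 - 3 * t ^ 4 / 64 - 5 * t ^ 6 / 256 - 175 * t ^ 8 / 16384) := by
  have h := integral_quartic_sin_sq_zero_pi_div_two 1 (-t ^ 2 / 2) (-t ^ 4 / 8) (-t ^ 6 / 16)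
    (-5 * t ^ 8 / 128)
  refine (intervalIntegral.integral_mono_on (by positivity) ?_ ?_ fun θ _ => ?_).trans_eq
    (h.trans (by ring))
  · apply Continuous.intervalIntegrable; fun_prop
  · apply Continuous.intervalIntegrable; fun_prop
  obtain ⟨h0, h1⟩ := sq_mul_sin_sq_mem_Icc ht θ
  convert sqrt_one_sub_le_taylor h0 h1 using 1
  ring

end EllipticBounds

lemma two_mul_add_le_log_sub_log {t : ℝ} (h0 : 0 ≤ t) (h1 : t < 1) :
    2 * t + 2 * t ^ 3 / 3 ≤ log (1 + t) - log (1 - t) := by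
  have hs := hasSum_log_sub_log_of_abs_lt_one (x := t) (by rw [abs_lt]; constructor <;> linarith)
  have := sum_le_hasSum (Finset.range 2) (fun i _ => by positivity) hs
  norm_num [Finset.sum_range_succ] at this
  linarith

lemma pi_mul_sq_div_two_lt_log_rpow_div_rpow {t : ℝ} (h0 : 0 < t) (h1 : t < 1) :
    π * t ^ 2 / 2 < log ((1 + t) ^ (1 - t) / (1 - t) ^ (1 + t)) := by
  have hp : 0 < 1 + t := by linarith
  have hm : 0 < 1 - t := by linarith
  rw [log_div (rpow_pos_of_pos hp _).ne' (rpow_pos_of_pos hm _).ne', log_rpow hp, log_rpow hm]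
  have hlog_add : 0 ≤ log (1 + t) := log_nonneg (by linarith)
  have hlog_sub : log (1 - t) ≤ -t := by linarith [log_le_sub_one_of_pos hm]
  nlinarith [pi_lt_d2, mul_le_mul_of_nonneg_left hlog_sub hp.le, mul_nonneg hm.le hlog_add]

lemma div_three_add_sq_div_six_lt_pi_mul {s : ℝ} (h0 : 0 < s) (h1 : s < 1) :
    s / 3 + s ^ 2 / 6 < π * (s / 8 + 3 * s ^ 2 / 128 + 5 * s ^ 3 / 512 + 175 * s ^ 4 / 32768) := by
  have hq : 0 < s / 8 + 3 * s ^ 2 / 128 + 5 * s ^ 3 / 512 + 175 * s ^ 4 / 32768 := by positivity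
  nlinarith [mul_lt_mul_of_pos_right pi_gt_d2 hq, mul_pos h0 h0, mul_pos (mul_pos h0 h0) h0,
    mul_pos h0 (sub_pos.2 h1), mul_pos (mul_pos h0 h0) (sub_pos.2 h1)]

lemma pi_div_two_mul_taylor_lt {t : ℝ} (h0 : 0 < t) (h1 : t < 1) :
    π / 2 * (1 - t ^ 2 / 4 - 3 * t ^ 4 / 64 - 5 * t ^ 6 / 256 - 175 * t ^ 8 / 16384) <
      (π - 1) / 2 + (1 - t ^ 2) / (4 * t) * log ((1 + t) / (1 - t)) := by
  have hlog : (1 - t ^ 2) * (3 + t ^ 2) / 6 ≤ (1 - t ^ 2) / (4 * t) * log ((1 + t) / (1 - t)) := by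
    rw [log_div (by linarith) (by linarith)]
    calc (1 - t ^ 2) * (3 + t ^ 2) / 6 = (1 - t ^ 2) / (4 * t) * (2 * t + 2 * t ^ 3 / 3) := by
          field_simp; ring
      _ ≤ _ := by
        gcongr
        · exact div_nonneg (by nlinarith) (by positivity)
        · exact two_mul_add_le_log_sub_log h0.le h1
  have hpoly := div_three_add_sq_div_six_lt_pi_mul (s := t ^ 2) (by positivity) (by nlinarith)
  linarith

theorem stmt_0 (t : ℝ) (ht0 : 0 < t) (ht1 : t < 1) :
    π / 2 - (1 / 2) * Real.log ((1 + t) ^ (1 - t) / (1 - t) ^ (1 + t))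
      < (∫ θ in (0:ℝ)..(π / 2), Real.sqrt (1 - t ^ 2 * Real.sin θ ^ 2)) ∧
    (∫ θ in (0:ℝ)..(π / 2), Real.sqrt (1 - t ^ 2 * Real.sin θ ^ 2))
      < (π - 1) / 2 + ((1 - t ^ 2) / (4 * t)) * Real.log ((1 + t) / (1 - t)) := by
  have ht : |t| ≤ 1 := abs_le.2 ⟨by linarith, ht1.le⟩
  refine ⟨?_, (completeEllipticE_le_pi_div_two_mul_taylor ht).trans_lt
    (pi_div_two_mul_taylor_lt ht0 ht1)⟩
  refine lt_of_lt_of_le ?_ (pi_div_two_mul_one_sub_sq_div_two_le_completeEllipticE ht)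
  linarith [pi_mul_sq_div_two_lt_log_rpow_div_rpow ht0 ht1]
end

section
/- For all real numbers a, b with b > a > 0, one has (π/2)·ln(√(b/a) + √(b/a − 1))/√(b(b−a)) ≤ F(a,b) ≤ (π/2)·arctan(√(b/a − 1))/√(a(b−a)). -/
/-!
Put θ = πx/2 with x ∈ [0, 1]. Jordan's inequality gives x ≤ sin θ, and the parabola bound
cos (πx/2) ≤ 1 - x² gives sin θ ≤ 1 - x² after the reflection θ ↦ π/2 - θ. Since
`a + (b - a) sin² θ ≤ √(a² cos² θ + b² sin² θ) ≤ a + (b - a) sin θ`, the integrand is squeezed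
between `1 / (b - (b - a) x²)` (reflected) and `1 / (a + (b - a) x²)`, whose integrals over
[0, 1] are elementary: an inverse hyperbolic tangent, written as a logarithm, and an arctangent.
-/

open Real

theorem cos_pi_div_two_mul_le_one_sub_sq {t : ℝ} (ht : |t| ≤ 1) :
    cos (π / 2 * t) ≤ 1 - t ^ 2 := by
  wlog ht₀ : 0 ≤ t generalizing t
  · simpa using this (t := -t) (by rwa [abs_neg]) (by linarith)
  rw [abs_of_nonneg ht₀] at ht
  have hπ₁ := pi_gt_d2
  have hπ₂ := pi_lt_d2
  set y := π / 2 * t with hy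
  have hy₀ : 0 ≤ y := by positivity
  rcases le_total y 1 with hy₁ | hy₁
  · have hcos := (abs_sub_le_iff.1 (cos_bound (x := y) (by rwa [abs_of_nonneg hy₀]))).1
    rw [abs_of_nonneg hy₀] at hcos
    have hy₄ : y ^ 4 ≤ y ^ 2 := pow_le_pow_of_le_one hy₀ hy₁ (by norm_num)
    have hπt : 9 * t ^ 2 ≤ π ^ 2 * t ^ 2 := by gcongr; nlinarith
    have : y ^ 2 = π ^ 2 * t ^ 2 / 4 := by rw [hy]; ring
    nlinarith
  · have hsin := sin_le (x := π / 2 - y) (by nlinarith)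
    rw [sin_pi_div_two_sub] at hsin
    have ht' : 0 ≤ 1 + t - π / 2 := by nlinarith
    nlinarith [mul_nonneg (sub_nonneg.2 ht) ht']

theorem add_sub_mul_sin_sq_le_sqrt (a b θ : ℝ) :
    a + (b - a) * sin θ ^ 2 ≤ √(a ^ 2 * cos θ ^ 2 + b ^ 2 * sin θ ^ 2) := by
  refine (le_abs_self _).trans (abs_le_sqrt ?_)
  have hc := cos_sq_add_sin_sq θ
  have hs := sin_sq_le_one θ
  nlinarith [mul_nonneg (mul_nonneg (sq_nonneg (b - a)) (sq_nonneg (sin θ))) (sub_nonneg.2 hs)]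

theorem sqrt_le_add_sub_mul_sin {a b θ : ℝ} (ha : 0 ≤ a) (hab : a ≤ b) (hθ : 0 ≤ sin θ) :
    √(a ^ 2 * cos θ ^ 2 + b ^ 2 * sin θ ^ 2) ≤ a + (b - a) * sin θ := by
  have hs := sin_le_one θ
  refine sqrt_le_iff.2 ⟨by nlinarith, ?_⟩
  have hc := cos_sq_add_sin_sq θ
  nlinarith [mul_nonneg (mul_nonneg (mul_nonneg ha (sub_nonneg.2 hab)) hθ) (sub_nonneg.2 hs)]

theorem le_sqrt_sq_mul_cos_sq_add_sq_mul_sin_sq {a b : ℝ} (hab : a ≤ b) (θ : ℝ) :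
    a ≤ √(a ^ 2 * cos θ ^ 2 + b ^ 2 * sin θ ^ 2) :=
  (le_add_of_nonneg_right (mul_nonneg (sub_nonneg.2 hab) (sq_nonneg _))).trans
    (add_sub_mul_sin_sq_le_sqrt a b θ)

theorem integral_one_div_add_mul_sq {p q : ℝ} (hp : 0 < p) (hq : 0 < q) (u v : ℝ) :
    ∫ x in u..v, 1 / (p + q * x ^ 2)
      = (arctan (√(q / p) * v) - arctan (√(q / p) * u)) / √(p * q) := by
  have hk : √(q / p) ^ 2 = q / p := sq_sqrt (by positivity)
  have hk₀ : √(q / p) ≠ 0 := (sqrt_pos.2 (by positivity)).ne'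
  have h (x : ℝ) : 1 / (p + q * x ^ 2) = p⁻¹ * (1 / (1 + (√(q / p) * x) ^ 2)) := by
    rw [mul_pow, hk]
    field_simp
  simp_rw [h, intervalIntegral.integral_const_mul,
    intervalIntegral.integral_comp_mul_left (fun x => 1 / (1 + x ^ 2)) hk₀,
    integral_one_div_one_add_sq, smul_eq_mul]
  rw [show p * q = p ^ 2 * (q / p) by field_simp, sqrt_mul (sq_nonneg p), sqrt_sq hp.le]
  field_simp

theorem intervalIntegrable_one_div_sub_mul_sq {p q : ℝ} (hq : 0 ≤ q) (hqp : q < p) :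
    IntervalIntegrable (fun x => 1 / (p - q * x ^ 2)) MeasureTheory.volume 0 1 := by
  refine ContinuousOn.intervalIntegrable (continuousOn_const.div (by fun_prop) fun x hx => ?_)
  rw [Set.uIcc_of_le zero_le_one] at hx
  have : q * x ^ 2 ≤ q := mul_le_of_le_one_right hq (pow_le_one₀ hx.1 hx.2)
  linarith

theorem integral_one_div_sub_mul_sq {p q : ℝ} (hq : 0 < q) (hqp : q < p) :
    ∫ x in (0 : ℝ)..1, 1 / (p - q * x ^ 2)
      = log ((√p + √q) / (√p - √q)) / (2 * √(p * q)) := by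
  obtain ⟨β, hβ, rfl⟩ : ∃ β, 0 < β ∧ p = β ^ 2 :=
    ⟨√p, sqrt_pos.2 (hq.trans hqp), (sq_sqrt (hq.trans hqp).le).symm⟩
  obtain ⟨γ, hγ, rfl⟩ : ∃ γ, 0 < γ ∧ q = γ ^ 2 := ⟨√q, sqrt_pos.2 hq, (sq_sqrt hq.le).symm⟩
  have hγβ : γ < β := (pow_lt_pow_iff_left₀ hγ.le hβ.le two_ne_zero).1 hqp
  have hderiv : ∀ x ∈ Set.uIcc (0 : ℝ) 1,
      HasDerivAt (fun x => (log (β + γ * x) - log (β - γ * x)) / (2 * β * γ))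
        (1 / (β ^ 2 - γ ^ 2 * x ^ 2)) x := by
    intro x hx
    rw [Set.uIcc_of_le zero_le_one] at hx
    have hplus : 0 < β + γ * x := by nlinarith [hx.1]
    have hminus : 0 < β - γ * x := by nlinarith [hx.2]
    have := ((((hasDerivAt_id x).const_mul γ).const_add β).log hplus.ne').sub
      ((((hasDerivAt_id x).const_mul γ).const_sub β).log hminus.ne') |>.div_const (2 * β * γ)
    refine this.congr_deriv ?_
    rw [show β ^ 2 - γ ^ 2 * x ^ 2 = (β + γ * x) * (β - γ * x) by ring]
    simp only [id, mul_one]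
    field_simp
    ring
  rw [intervalIntegral.integral_eq_sub_of_hasDerivAt hderiv
    (intervalIntegrable_one_div_sub_mul_sq hq.le hqp), sqrt_sq hβ.le, sqrt_sq hγ.le,
    ← mul_pow, sqrt_sq (by positivity), log_div (by positivity) (by linarith)]
  simp [mul_assoc]

theorem integral_zero_pi_div_two_eq (f : ℝ → ℝ) :
    ∫ θ in (0 : ℝ)..(π / 2), f θ = π / 2 * ∫ x in (0 : ℝ)..1, f (π / 2 * x) := by
  rw [← smul_eq_mul, intervalIntegral.smul_integral_comp_mul_left]
  simp

theorem continuous_one_div_sqrt {a b : ℝ} (ha : 0 < a) (hab : a ≤ b) :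
    Continuous fun θ => 1 / √(a ^ 2 * cos θ ^ 2 + b ^ 2 * sin θ ^ 2) :=
  continuous_const.div (by fun_prop) fun θ =>
    (ha.trans_le (le_sqrt_sq_mul_cos_sq_add_sq_mul_sin_sq hab θ)).ne'

theorem integral_one_div_sqrt_le_arctan {a b : ℝ} (ha : 0 < a) (hab : a < b) :
    ∫ θ in (0 : ℝ)..(π / 2), 1 / √(a ^ 2 * cos θ ^ 2 + b ^ 2 * sin θ ^ 2)
      ≤ π / 2 * arctan (√(b / a - 1)) / √(a * (b - a)) := by
  have hba : 0 < b - a := sub_pos.2 hab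
  have hbound (x : ℝ) (hx : x ∈ Set.Icc (0 : ℝ) 1) :
      1 / √(a ^ 2 * cos (π / 2 * x) ^ 2 + b ^ 2 * sin (π / 2 * x) ^ 2)
        ≤ 1 / (a + (b - a) * x ^ 2) := by
    have hjordan : x ≤ sin (π / 2 * x) := calc
      x = 2 / π * (π / 2 * x) := by field_simp
      _ ≤ sin (π / 2 * x) := mul_le_sin (by nlinarith [pi_pos, hx.1]) (by nlinarith [pi_pos, hx.2])
    refine one_div_le_one_div_of_le (by nlinarith [sq_nonneg x]) ?_
    calc a + (b - a) * x ^ 2 ≤ a + (b - a) * sin (π / 2 * x) ^ 2 := by gcongr; exact hx.1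
      _ ≤ _ := add_sub_mul_sin_sq_le_sqrt a b _
  have hcomp : Continuous fun x : ℝ => 1 / (a + (b - a) * x ^ 2) :=
    continuous_const.div (by fun_prop) fun x => by nlinarith [sq_nonneg x]
  rw [integral_zero_pi_div_two_eq, mul_div_assoc]
  gcongr
  calc _ ≤ ∫ x in (0 : ℝ)..1, 1 / (a + (b - a) * x ^ 2) :=
        intervalIntegral.integral_mono_on zero_le_one
          (((continuous_one_div_sqrt ha hab.le).comp (continuous_const_mul _)).intervalIntegrable
            _ _)
          (hcomp.intervalIntegrable _ _) hbound
    _ = _ := by rw [integral_one_div_add_mul_sq ha hba, div_sub_one ha.ne']; simp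

theorem log_le_integral_one_div_sqrt {a b : ℝ} (ha : 0 < a) (hab : a < b) :
    π / 2 * log (√(b / a) + √(b / a - 1)) / √(b * (b - a))
      ≤ ∫ θ in (0 : ℝ)..(π / 2), 1 / √(a ^ 2 * cos θ ^ 2 + b ^ 2 * sin θ ^ 2) := by
  have hba : 0 < b - a := sub_pos.2 hab
  have hbound (x : ℝ) (hx : x ∈ Set.Icc (0 : ℝ) 1) :
      1 / (b - (b - a) * x ^ 2) ≤
        1 / √(a ^ 2 * cos (π / 2 - π / 2 * x) ^ 2 + b ^ 2 * sin (π / 2 - π / 2 * x) ^ 2) := by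
    have hcos₀ : 0 ≤ cos (π / 2 * x) :=
      cos_nonneg_of_mem_Icc ⟨by nlinarith [pi_pos, hx.1], by nlinarith [pi_pos, hx.2]⟩
    have hcos := cos_pi_div_two_mul_le_one_sub_sq (abs_le.2 ⟨by linarith [hx.1], hx.2⟩)
    have hsqrt := sqrt_le_add_sub_mul_sin ha.le hab.le (θ := π / 2 - π / 2 * x)
      (by rwa [sin_pi_div_two_sub])
    refine one_div_le_one_div_of_le
      (ha.trans_le (le_sqrt_sq_mul_cos_sq_add_sq_mul_sin_sq hab.le _)) ?_
    calc _ ≤ a + (b - a) * cos (π / 2 * x) := hsqrt.trans_eq (by rw [sin_pi_div_two_sub])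
      _ ≤ a + (b - a) * (1 - x ^ 2) := by gcongr
      _ = b - (b - a) * x ^ 2 := by ring
  have hlog : (√b + √(b - a)) / (√b - √(b - a)) = (√(b / a) + √(b / a - 1)) ^ 2 := by
    have hprod : a = (√b + √(b - a)) * (√b - √(b - a)) := by
      ring_nf; rw [sq_sqrt (ha.trans hab).le, sq_sqrt hba.le]; ring
    have hne : √b - √(b - a) ≠ 0 := by
      intro h; rw [h, mul_zero] at hprod; exact ha.ne' hprod
    rw [div_sub_one ha.ne', sqrt_div' _ ha.le, sqrt_div' _ ha.le, ← add_div, div_pow,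
      sq_sqrt ha.le, eq_div_iff ha.ne', div_mul_eq_mul_div, div_eq_iff hne]
    nth_rewrite 2 [hprod]
    ring
  calc π / 2 * log (√(b / a) + √(b / a - 1)) / √(b * (b - a))
      = π / 2 * ∫ x in (0 : ℝ)..1, 1 / (b - (b - a) * x ^ 2) := by
        rw [integral_one_div_sub_mul_sq hba (by linarith), hlog, log_pow,
          sqrt_mul (ha.trans hab).le]
        push_cast
        ring
    _ ≤ π / 2 * ∫ x in (0 : ℝ)..1,
          1 / √(a ^ 2 * cos (π / 2 - π / 2 * x) ^ 2 + b ^ 2 * sin (π / 2 - π / 2 * x) ^ 2) := by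
        gcongr
        exact intervalIntegral.integral_mono_on zero_le_one
          (intervalIntegrable_one_div_sub_mul_sq hba.le (by linarith))
          (((continuous_one_div_sqrt ha hab.le).comp
            (continuous_const.sub (continuous_const_mul _))).intervalIntegrable _ _) hbound
    _ = ∫ θ in (0 : ℝ)..(π / 2),
          1 / √(a ^ 2 * cos (π / 2 - θ) ^ 2 + b ^ 2 * sin (π / 2 - θ) ^ 2) :=
        (integral_zero_pi_div_two_eq fun θ =>
          1 / √(a ^ 2 * cos (π / 2 - θ) ^ 2 + b ^ 2 * sin (π / 2 - θ) ^ 2)).symm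
    _ = _ := by
        rw [intervalIntegral.integral_comp_sub_left
          (fun θ => 1 / √(a ^ 2 * cos θ ^ 2 + b ^ 2 * sin θ ^ 2))]
        simp

theorem stmt_1 (a b : ℝ) (ha : 0 < a) (hab : a < b) :
    (π / 2) * Real.log (Real.sqrt (b / a) + Real.sqrt (b / a - 1)) / Real.sqrt (b * (b - a))
      ≤ (∫ θ in (0:ℝ)..(π / 2),
          1 / Real.sqrt (a ^ 2 * Real.cos θ ^ 2 + b ^ 2 * Real.sin θ ^ 2)) ∧
    (∫ θ in (0:ℝ)..(π / 2),
        1 / Real.sqrt (a ^ 2 * Real.cos θ ^ 2 + b ^ 2 * Real.sin θ ^ 2))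
      ≤ (π / 2) * Real.arctan (Real.sqrt (b / a - 1)) / Real.sqrt (a * (b - a)) :=
  ⟨log_le_integral_one_div_sqrt ha hab, integral_one_div_sqrt_le_arctan ha hab⟩
end

section
/- For every positive integer i, one has 4^i/√(π(i + 1/2)) < C(2i, i) < 4^i/√(π(i + 1/4)), where C(2i, i) denotes the central binomial coefficient. -/
/-!
Put `a k = C(2k, k) / 4 ^ k`. Since `a (k + 1) = a k * (2k + 1) / (2k + 2)`, the Wallis partial
product satisfies `W k * a k ^ 2 * (2k + 1) = 1`, so Wallis' formula gives
`a k ^ 2 * (k + 1/2) → 1/π`. The same recursion shows that `a k ^ 2 * (k + 1/2)` is strictly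
decreasing and `a k ^ 2 * (k + 1/4)` strictly increasing; as the latter lies below the former,
both sequences approach `1/π` strictly from their respective sides.
-/

open Real Filter Topology

section

variable {α β : Type*} [TopologicalSpace α] [Preorder α] [OrderClosedTopology α]
  [SemilatticeSup β] [NoMaxOrder β] {f g : β → α} {a : α}

theorem StrictAnti.lt_of_tendsto (hf : StrictAnti f) (ha : Tendsto f atTop (𝓝 a)) (b : β) :
    a < f b := by
  obtain ⟨c, hbc⟩ := exists_gt b
  exact (hf.antitone.le_of_tendsto ha c).trans_lt (hf hbc)

theorem StrictMono.lt_of_le_of_tendsto (hg : StrictMono g) (hgf : g ≤ f)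
    (ha : Tendsto f atTop (𝓝 a)) (b : β) : g b < a := by
  have : Nonempty β := ⟨b⟩
  obtain ⟨c, hbc⟩ := exists_gt b
  refine (hg hbc).trans_le (ge_of_tendsto ha ?_)
  filter_upwards [eventually_ge_atTop c] with m hcm
  exact (hg.monotone hcm).trans (hgf m)

end

namespace Nat

noncomputable def centralBinomDivFourPow (k : ℕ) : ℝ := centralBinom k / 4 ^ k

lemma centralBinomDivFourPow_pos (k : ℕ) : 0 < centralBinomDivFourPow k := by
  unfold centralBinomDivFourPow
  have := centralBinom_pos k
  positivity

lemma centralBinomDivFourPow_succ (k : ℕ) :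
    centralBinomDivFourPow (k + 1) = centralBinomDivFourPow k * ((2 * k + 1) / (2 * k + 2)) := by
  have h : ((k : ℝ) + 1) * centralBinom (k + 1) = 2 * (2 * k + 1) * centralBinom k := by
    exact_mod_cast succ_mul_centralBinom_succ k
  unfold centralBinomDivFourPow
  rw [pow_succ]
  field_simp
  linear_combination 2 * h

lemma wallis_W_mul_sq_centralBinomDivFourPow (k : ℕ) :
    Real.Wallis.W k * centralBinomDivFourPow k ^ 2 * (2 * k + 1) = 1 := by
  induction k with
  | zero => simp [Real.Wallis.W, centralBinomDivFourPow]
  | succ k ih =>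
    refine Eq.trans ?_ ih
    rw [Real.Wallis.W_succ, centralBinomDivFourPow_succ]
    push_cast
    field_simp
    ring

lemma tendsto_sq_centralBinomDivFourPow_mul_add_half :
    Tendsto (fun k : ℕ ↦ centralBinomDivFourPow k ^ 2 * (k + 1 / 2)) atTop (𝓝 π⁻¹) := by
  have hW : Tendsto (fun k ↦ (2 * Real.Wallis.W k)⁻¹) atTop (𝓝 π⁻¹) := by
    have h := (Real.Wallis.tendsto_W_nhds_pi_div_two.const_mul 2).inv₀ (by positivity)
    rwa [mul_div_cancel₀ π two_ne_zero] at h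
  refine hW.congr fun k ↦ ?_
  have := wallis_W_mul_sq_centralBinomDivFourPow k
  have := Real.Wallis.W_pos k
  field_simp
  linarith

lemma strictAnti_sq_centralBinomDivFourPow_mul_add_half :
    StrictAnti fun k : ℕ ↦ centralBinomDivFourPow k ^ 2 * (k + 1 / 2) := by
  refine strictAnti_nat_of_succ_lt fun k ↦ ?_
  have := centralBinomDivFourPow_pos k
  rw [centralBinomDivFourPow_succ]
  push_cast
  field_simp
  nlinarith

lemma strictMono_sq_centralBinomDivFourPow_mul_add_quarter :
    StrictMono fun k : ℕ ↦ centralBinomDivFourPow k ^ 2 * (k + 1 / 4) := by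
  refine strictMono_nat_of_lt_succ fun k ↦ ?_
  have := centralBinomDivFourPow_pos k
  rw [centralBinomDivFourPow_succ]
  push_cast
  field_simp
  nlinarith

lemma inv_sqrt_pi_mul_add_half_lt_centralBinomDivFourPow (k : ℕ) :
    (√(π * (k + 1 / 2)))⁻¹ < centralBinomDivFourPow k := by
  have hlt := strictAnti_sq_centralBinomDivFourPow_mul_add_half.lt_of_tendsto
    tendsto_sq_centralBinomDivFourPow_mul_add_half k
  rw [← Real.sqrt_inv, Real.sqrt_lt' (centralBinomDivFourPow_pos k), mul_inv,
    mul_inv_lt_iff₀ (by positivity)]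
  exact hlt

lemma centralBinomDivFourPow_lt_inv_sqrt_pi_mul_add_quarter (k : ℕ) :
    centralBinomDivFourPow k < (√(π * (k + 1 / 4)))⁻¹ := by
  have hle : (fun k : ℕ ↦ centralBinomDivFourPow k ^ 2 * (k + 1 / 4)) ≤
      fun k ↦ centralBinomDivFourPow k ^ 2 * (k + 1 / 2) := fun k ↦ by
    dsimp only
    gcongr
    norm_num
  have hlt := strictMono_sq_centralBinomDivFourPow_mul_add_quarter.lt_of_le_of_tendsto hle
    tendsto_sq_centralBinomDivFourPow_mul_add_half k
  rw [← Real.sqrt_inv, Real.lt_sqrt (centralBinomDivFourPow_pos k).le, mul_inv,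
    lt_mul_inv_iff₀ (by positivity)]
  exact hlt

end Nat

theorem stmt_5_general (i : ℕ) :
    (4:ℝ) ^ i / Real.sqrt (π * (i + 1 / 2)) < (Nat.choose (2 * i) i : ℝ) ∧
    (Nat.choose (2 * i) i : ℝ) < (4:ℝ) ^ i / Real.sqrt (π * (i + 1 / 4)) := by
  have hchoose : (Nat.choose (2 * i) i : ℝ) = 4 ^ i * Nat.centralBinomDivFourPow i := by
    rw [Nat.centralBinomDivFourPow, Nat.centralBinom, mul_div_cancel₀ _ (by positivity)]
  rw [hchoose, div_eq_mul_inv, div_eq_mul_inv]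
  exact ⟨mul_lt_mul_of_pos_left (Nat.inv_sqrt_pi_mul_add_half_lt_centralBinomDivFourPow i)
      (by positivity),
    mul_lt_mul_of_pos_left (Nat.centralBinomDivFourPow_lt_inv_sqrt_pi_mul_add_quarter i)
      (by positivity)⟩

theorem stmt_5 (i : ℕ) (hi : 0 < i) :
    (4:ℝ) ^ i / Real.sqrt (π * (i + 1 / 2)) < (Nat.choose (2 * i) i : ℝ) ∧
    (Nat.choose (2 * i) i : ℝ) < (4:ℝ) ^ i / Real.sqrt (π * (i + 1 / 4)) :=
  stmt_5_general i
end

section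
/- For all real t with 0 < t < 1, one has E(t) = (π/2)·[1 − ∑_{i=1}^∞ (1/(4^{2i}(2i−1)))·C(2i, i)²·t^{2i}], where C(2i, i) denotes the central binomial coefficient. -/
/-!
Expand the integrand with the binomial series `√(1 - x) = ∑ₙ (1/2 choose n) (-x)ⁿ` at
`x = t² sin² θ`. Since `(1/2 choose n) (-1)ⁿ = -C(2n, n) / (4ⁿ (2n - 1))` has absolute value at
most `1`, the series is dominated by the geometric series `∑ t²ⁿ` and may be integrated term by
term. Wallis' integral `∫₀^{π/2} sin²ⁿ θ dθ = (π/2) C(2n, n) / 4ⁿ` then gives the coefficients;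
the term `n = 0` contributes the leading `π/2`.
-/

open Real

theorem Ring.choose_succ_right_eq {R : Type*} [Field R] [CharZero R] (a : R) (n : ℕ) :
    Ring.choose a (n + 1) * (n + 1) = Ring.choose a n * (a - n) := by
  simp only [Ring.choose_eq_smul, descPochhammer_succ_right, Polynomial.smeval_mul,
    Polynomial.smeval_sub, Polynomial.smeval_X, Polynomial.smeval_natCast, Nat.factorial_succ,
    smul_eq_mul]
  push_cast
  field_simp
  ring

theorem one_le_abs_two_mul_natCast_sub_one (n : ℕ) : 1 ≤ |2 * (n : ℝ) - 1| := by
  rcases n with _ | n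
  · norm_num
  · rw [abs_of_nonneg] <;> push_cast <;> linarith [(n.cast_nonneg : (0 : ℝ) ≤ n)]

theorem two_mul_natCast_sub_one_ne_zero (n : ℕ) : 2 * (n : ℝ) - 1 ≠ 0 :=
  abs_pos.mp (one_pos.trans_le (one_le_abs_two_mul_natCast_sub_one n))

theorem Ring.choose_half_mul_neg_one_pow (n : ℕ) :
    Ring.choose (1 / 2 : ℝ) n * (-1) ^ n = -(n.centralBinom / (4 ^ n * (2 * n - 1))) := by
  induction n with
  | zero => norm_num
  | succ n ih =>
    have hcentral : ((n : ℝ) + 1) * (n + 1).centralBinom = 2 * (2 * n + 1) * n.centralBinom := by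
      exact_mod_cast Nat.succ_mul_centralBinom_succ n
    have hchoose := Ring.choose_succ_right_eq (1 / 2 : ℝ) n
    have hstep : Ring.choose (1 / 2 : ℝ) (n + 1) * (-1) ^ (n + 1)
        = Ring.choose (1 / 2 : ℝ) n * (-1) ^ n * (2 * n - 1) / (2 * (n + 1)) := by
      field_simp
      linear_combination (-2 * (-1) ^ n : ℝ) * hchoose
    have hne : 2 * ((n : ℝ) + 1) - 1 ≠ 0 := by linarith [(n.cast_nonneg : (0 : ℝ) ≤ n)]
    have hodd := two_mul_natCast_sub_one_ne_zero n
    rw [hstep, ih]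
    push_cast
    field_simp
    linear_combination (2 * 4 ^ n : ℝ) * hcentral

theorem abs_centralBinom_div_le_one (n : ℕ) :
    |(n.centralBinom : ℝ) / (4 ^ n * (2 * n - 1))| ≤ 1 := by
  have hodd := one_le_abs_two_mul_natCast_sub_one n
  rw [abs_div, abs_mul, div_le_one (by positivity), abs_of_nonneg (by positivity),
    abs_of_nonneg (by positivity)]
  calc (n.centralBinom : ℝ) ≤ 4 ^ n := by exact_mod_cast n.centralBinom_le_four_pow
    _ ≤ 4 ^ n * |2 * (n : ℝ) - 1| := le_mul_of_one_le_right (by positivity) hodd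

theorem hasSum_sqrt_one_sub {x : ℝ} (hx : |x| < 1) :
    HasSum (fun n : ℕ => -(n.centralBinom / (4 ^ n * (2 * n - 1))) * x ^ n) (√(1 - x)) := by
  have hball : -x ∈ Metric.eball (0 : ℝ) 1 := by
    simpa [edist_zero_right, enorm_eq_nnnorm, ← NNReal.coe_lt_one]
  have h := Real.one_add_rpow_hasFPowerSeriesOnBall_zero (a := 1 / 2) |>.hasSum hball
  simp only [binomialSeries_apply, List.ofFn_const, List.prod_replicate, smul_eq_mul,
    zero_add] at h
  rw [sqrt_eq_rpow, sub_eq_add_neg]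
  have hcoeff (n : ℕ) : -(n.centralBinom / (4 ^ n * (2 * n - 1))) * x ^ n
      = Ring.choose (1 / 2 : ℝ) n * (-x) ^ n := by
    rw [neg_pow, ← mul_assoc, Ring.choose_half_mul_neg_one_pow]
  simp_rw [hcoeff]
  exact h

theorem integral_sin_pow_even_zero_pi_div_two (n : ℕ) :
    ∫ x in (0 : ℝ)..π / 2, sin x ^ (2 * n) = π / 2 * (n.centralBinom / 4 ^ n) := by
  induction n with
  | zero => simp
  | succ n ih =>
    have hcentral : ((n : ℝ) + 1) * (n + 1).centralBinom = 2 * (2 * n + 1) * n.centralBinom := by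
      exact_mod_cast Nat.succ_mul_centralBinom_succ n
    rw [show 2 * (n + 1) = 2 * n + 2 by ring, integral_sin_pow, ih, sin_zero, cos_pi_div_two,
      zero_pow (by omega), zero_mul, mul_zero, sub_zero, zero_div, zero_add]
    push_cast
    field_simp
    linear_combination (-2 * 4 ^ n : ℝ) * hcentral

theorem hasSum_integral_sqrt_one_sub_sq_mul_sin_sq {k : ℝ} (hk : |k| < 1) :
    HasSum (fun n : ℕ => -(π / 2) *
        (1 / ((4 : ℝ) ^ (2 * n) * (2 * n - 1)) * (n.centralBinom : ℝ) ^ 2 * k ^ (2 * n)))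
      (∫ θ in (0 : ℝ)..π / 2, √(1 - k ^ 2 * sin θ ^ 2)) := by
  set c : ℕ → ℝ := fun n => -(n.centralBinom / (4 ^ n * (2 * n - 1)))
  have hk2 : k ^ 2 < 1 := (sq_lt_one_iff_abs_lt_one k).mpr hk
  have hx (θ : ℝ) : |k ^ 2 * sin θ ^ 2| ≤ k ^ 2 := by
    rw [abs_of_nonneg (by positivity)]
    exact mul_le_of_le_one_right (sq_nonneg k) (sin_sq_le_one θ)
  have hterms := intervalIntegral.hasSum_integral_of_dominated_convergence
    (a := 0) (b := π / 2) (F := fun n θ => c n * (k ^ 2 * sin θ ^ 2) ^ n)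
    (fun n _ => (k ^ 2) ^ n) (fun n => by fun_prop)
    (fun n => Filter.Eventually.of_forall fun θ _ => by
      rw [norm_mul, norm_pow, norm_neg, Real.norm_eq_abs, Real.norm_eq_abs]
      exact (mul_le_of_le_one_left (by positivity) (abs_centralBinom_div_le_one n)).trans
        (pow_le_pow_left₀ (abs_nonneg _) (hx θ) n))
    (Filter.Eventually.of_forall fun _ _ => summable_geometric_of_lt_one (sq_nonneg k) hk2)
    (intervalIntegrable_const (μ := MeasureTheory.volume))
    (Filter.Eventually.of_forall fun θ _ => hasSum_sqrt_one_sub ((hx θ).trans_lt hk2))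
  have hterm (n : ℕ) : ∫ θ in (0 : ℝ)..π / 2, c n * (k ^ 2 * sin θ ^ 2) ^ n
      = -(π / 2) *
        (1 / ((4 : ℝ) ^ (2 * n) * (2 * n - 1)) * (n.centralBinom : ℝ) ^ 2 * k ^ (2 * n)) := by
    simp_rw [mul_pow, ← pow_mul, ← mul_assoc]
    rw [intervalIntegral.integral_const_mul, integral_sin_pow_even_zero_pi_div_two]
    have hodd := two_mul_natCast_sub_one_ne_zero n
    simp only [c]
    field_simp
    ring
  simpa only [hterm] using hterms

theorem stmt_7 (t : ℝ) (ht0 : 0 < t) (ht1 : t < 1) :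
    (∫ θ in (0:ℝ)..(π / 2), Real.sqrt (1 - t ^ 2 * Real.sin θ ^ 2))
      = (π / 2) * (1 - ∑' i : ℕ,
          (1 / ((4:ℝ) ^ (2 * (i + 1)) * (2 * (i + 1) - 1)))
            * (Nat.choose (2 * (i + 1)) (i + 1) : ℝ) ^ 2 * t ^ (2 * (i + 1))) := by
  have h := hasSum_integral_sqrt_one_sub_sq_mul_sin_sq (abs_lt.mpr ⟨by linarith, ht1⟩)
  rw [← h.tsum_eq, h.summable.tsum_eq_zero_add, tsum_mul_left]
  norm_num [Nat.centralBinom_eq_two_mul_choose]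
  ring
end

section
/- For all real t with 0 < t < 1, one has ∑_{i=1}^∞ t^{2i}/((2i−1)(4i+1)) < (1/4)·ln((1+t)^{1−t}/(1−t)^{1+t}). -/
open Real

/-
The comparison 4n + 1 > 4n gives, term by term,
  t^(2n) / ((2n - 1)(4n + 1)) < (1/2) · t^(2n) / ((2n - 1) · 2n) = (1/2) · (t^(2n)/(2n - 1) - t^(2n)/(2n)),
and the last two series are t · artanh t and -(1/2) log(1 - t²). So the sum is strictly less than
(1/4)((1 + t) log(1 + t) + (1 - t) log(1 - t)), and this is at most the right-hand side
(1/4)((1 - t) log(1 + t) - (1 + t) log(1 - t)) because t log(1 + t) ≤ t² ≤ t ≤ -log(1 - t).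
-/

lemma hasSum_pow_two_mul_div_two_mul_sub_one {t : ℝ} (ht : |t| < 1) :
    HasSum (fun k : ℕ => t ^ (2 * (k + 1)) / (2 * (k + 1 : ℝ) - 1))
      (t / 2 * (log (1 + t) - log (1 - t))) := by
  refine ((hasSum_log_sub_log_of_abs_lt_one ht).mul_left (t / 2)).congr_fun fun k => ?_
  rw [show 2 * (k + 1) = 2 * k + 1 + 1 by ring, pow_succ,
    show (2 * (k + 1 : ℝ) - 1) = 2 * k + 1 by ring]
  field_simp

lemma hasSum_pow_two_mul_div_two_mul {t : ℝ} (ht : |t| < 1) :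
    HasSum (fun k : ℕ => t ^ (2 * (k + 1)) / (2 * (k + 1 : ℝ))) (-log (1 - t ^ 2) / 2) := by
  have ht2 : |t ^ 2| < 1 := by
    rw [abs_pow, sq_lt_one_iff₀ (abs_nonneg t)]
    exact ht
  refine ((hasSum_pow_div_log_of_abs_lt_one ht2).div_const 2).congr_fun fun k => ?_
  rw [← pow_mul]
  field_simp

lemma hasSum_pow_two_mul_div_two_mul_sub_one_mul_two_mul {t : ℝ} (ht : |t| < 1) :
    HasSum (fun k : ℕ => t ^ (2 * (k + 1)) / ((2 * (k + 1 : ℝ) - 1) * (2 * (k + 1 : ℝ))))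
      (((1 + t) * log (1 + t) + (1 - t) * log (1 - t)) / 2) := by
  obtain ⟨ht₁, ht₂⟩ := abs_lt.mp ht
  have hlog : log (1 - t ^ 2) = log (1 + t) + log (1 - t) := by
    rw [← log_mul (by linarith) (by linarith)]
    ring_nf
  rw [show ((1 + t) * log (1 + t) + (1 - t) * log (1 - t)) / 2
      = t / 2 * (log (1 + t) - log (1 - t)) - -log (1 - t ^ 2) / 2 by rw [hlog]; ring]
  refine ((hasSum_pow_two_mul_div_two_mul_sub_one ht).sub
    (hasSum_pow_two_mul_div_two_mul ht)).congr_fun fun k => ?_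
  have hk : (2 * (k + 1 : ℝ) - 1) ≠ 0 := by linarith [(k.cast_nonneg : (0 : ℝ) ≤ k)]
  field_simp
  ring

lemma tsum_pow_two_mul_div_lt {t : ℝ} (ht0 : t ≠ 0) (ht : |t| < 1) :
    ∑' k : ℕ, t ^ (2 * (k + 1)) / ((2 * (k + 1 : ℝ) - 1) * (4 * (k + 1 : ℝ) + 1))
      < ((1 + t) * log (1 + t) + (1 - t) * log (1 - t)) / 4 := by
  have hg := (hasSum_pow_two_mul_div_two_mul_sub_one_mul_two_mul ht).div_const 2
  rw [div_div, show (2 : ℝ) * 2 = 4 by norm_num] at hg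
  have hpos : ∀ k : ℕ, 0 < t ^ (2 * (k + 1)) ∧ 0 < 2 * (k + 1 : ℝ) - 1 := fun k =>
    ⟨(even_two_mul _).pow_pos ht0, by linarith [(k.cast_nonneg : (0 : ℝ) ≤ k)]⟩
  have hfg : ∀ k : ℕ, t ^ (2 * (k + 1)) / ((2 * (k + 1 : ℝ) - 1) * (4 * (k + 1 : ℝ) + 1))
      < t ^ (2 * (k + 1)) / ((2 * (k + 1 : ℝ) - 1) * (2 * (k + 1 : ℝ))) / 2 := by
    intro k
    obtain ⟨hnum, hden⟩ := hpos k
    rw [div_div, mul_assoc]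
    gcongr
    linarith
  have hf : Summable fun k : ℕ =>
      t ^ (2 * (k + 1)) / ((2 * (k + 1 : ℝ) - 1) * (4 * (k + 1 : ℝ) + 1)) :=
    hg.summable.of_nonneg_of_le (fun k => (div_pos (hpos k).1 (mul_pos (hpos k).2 (by positivity))).le)
      fun k => (hfg k).le
  exact hasSum_lt (fun k => (hfg k).le) (hfg 0) hf.hasSum hg

lemma mul_log_one_add_add_log_one_sub_nonpos {t : ℝ} (ht0 : 0 ≤ t) (ht1 : t < 1) :
    t * log (1 + t) + log (1 - t) ≤ 0 := by
  have hp : log (1 + t) ≤ t := by linarith [log_le_sub_one_of_pos (by linarith : 0 < 1 + t)]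
  have hm : log (1 - t) ≤ -t := by linarith [log_le_sub_one_of_pos (by linarith : 0 < 1 - t)]
  nlinarith [mul_le_mul_of_nonneg_left hp ht0]

theorem stmt_10 (t : ℝ) (ht0 : 0 < t) (ht1 : t < 1) :
    (∑' i : ℕ, t ^ (2 * (i + 1)) / ((2 * (i + 1 : ℝ) - 1) * (4 * (i + 1 : ℝ) + 1)))
      < (1 / 4) * Real.log ((1 + t) ^ (1 - t) / (1 - t) ^ (1 + t)) := by
  have hlog : log ((1 + t) ^ (1 - t) / (1 - t) ^ (1 + t))
      = (1 - t) * log (1 + t) - (1 + t) * log (1 - t) := by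
    rw [log_div (by positivity) (by positivity), log_rpow (by linarith), log_rpow (by linarith)]
  refine (tsum_pow_two_mul_div_lt ht0.ne' (abs_lt.mpr ⟨by linarith, ht1⟩)).trans_le ?_
  rw [hlog]
  linarith [mul_log_one_add_add_log_one_sub_nonpos ht0.le ht1]
end

section
/- For every real t > 0, one has (π/2)·ln((1+t²)^{1/4} + √(√(1+t²) − 1))/√(1 + t² − √(1+t²)) ≤ ∫₀^{π/2} dθ/√(1 + t² cos²θ) ≤ (π/2)·arctan(√(√(1+t²) − 1))/√(√(1+t²) − 1). -/
open Real Set MeasureTheory intervalIntegral Filter Topology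

/-!
Put `s = √(1 + t²) = 1 + u²`, so that the integrand is `1 / √(s² cos² θ + sin² θ)`.

Upper bound: convexity of `x ↦ x²` with weights `cos² θ, sin² θ` gives
`√(s² cos² θ + sin² θ) ≥ s cos² θ + sin² θ = 1 + u² cos² θ`, and Jordan's inequality
`cos θ ≥ 1 - 2θ/π` leaves the integral of `1 / (1 + u² (1 - 2θ/π)²)`, which is `(π / 2u) arctan u`.

Lower bound: the Gauss–Landen substitution `tan θ = √(a/b) tan φ` followed by `ψ = 2φ` turns
`∫ dθ / √(a² cos² θ + b² sin² θ)` into `∫ dψ / √(ab + ((a - b)/2)² sin² ψ)`. For `a = s, b = 1`,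
`sin² ψ ≤ ψ²` and `π < 4` bound the new integrand below by `1 / (√s √(1 + (2uψ/π)²))`, whose
integral is `(π / 2u) arsinh u / √s`, and `arsinh u = log (√s + u)`.
-/

theorem sq_mul_cos_sq_add_sq_mul_sin_sq_pos {a b : ℝ} (ha : a ≠ 0) (hb : b ≠ 0) (θ : ℝ) :
    0 < a ^ 2 * cos θ ^ 2 + b ^ 2 * sin θ ^ 2 := by
  rcases eq_or_ne (cos θ) 0 with hc | hc
  · have hs : sin θ ^ 2 = 1 := by simpa [hc] using sin_sq_add_cos_sq θ
    rw [hc, hs]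
    positivity
  · exact add_pos_of_pos_of_nonneg (by positivity) (by positivity)

theorem mul_cos_sq_add_mul_sin_sq_le_sqrt (a b θ : ℝ) :
    a * cos θ ^ 2 + b * sin θ ^ 2 ≤ √(a ^ 2 * cos θ ^ 2 + b ^ 2 * sin θ ^ 2) := by
  refine le_sqrt_of_sq_le (sub_nonneg.1 ?_)
  have hgap : a ^ 2 * cos θ ^ 2 + b ^ 2 * sin θ ^ 2 - (a * cos θ ^ 2 + b * sin θ ^ 2) ^ 2
      = ((a - b) * cos θ * sin θ) ^ 2 := by
    linear_combination -(a ^ 2 * cos θ ^ 2 + b ^ 2 * sin θ ^ 2) * sin_sq_add_cos_sq θ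
  rw [hgap]
  positivity

theorem continuous_one_div_sqrt_sq_mul_cos_sq_add_sq_mul_sin_sq {a b : ℝ} (ha : a ≠ 0)
    (hb : b ≠ 0) : Continuous fun θ => 1 / √(a ^ 2 * cos θ ^ 2 + b ^ 2 * sin θ ^ 2) :=
  continuous_const.div (by fun_prop) fun θ =>
    (sqrt_pos.2 (sq_mul_cos_sq_add_sq_mul_sin_sq_pos ha hb θ)).ne'

theorem integral_inv_sqrt_one_add_sq (a b : ℝ) :
    ∫ x in a..b, 1 / √(1 + x ^ 2) = arsinh b - arsinh a := by
  refine integral_eq_sub_of_hasDerivAt (fun x _ => by simpa using hasDerivAt_arsinh x) ?_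
  exact (continuous_const.div (by fun_prop) fun x => by positivity).intervalIntegrable _ _

theorem integral_inv_sqrt_one_add_mul_sq {u : ℝ} (hu : 0 < u) :
    ∫ ψ in (0:ℝ)..π / 2, 1 / √(1 + (2 * u / π * ψ) ^ 2) = π / (2 * u) * arsinh u := by
  rw [integral_comp_mul_left (fun x => 1 / √(1 + x ^ 2)) (by positivity),
    integral_inv_sqrt_one_add_sq, mul_zero, arsinh_zero, sub_zero,
    show 2 * u / π * (π / 2) = u by field_simp, smul_eq_mul]
  field_simp

theorem integral_inv_one_add_sub_mul_sq {u : ℝ} (hu : 0 < u) :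
    ∫ θ in (0:ℝ)..π / 2, 1 / (1 + (u - 2 * u / π * θ) ^ 2) = π / (2 * u) * arctan u := by
  rw [integral_comp_sub_mul (fun x => 1 / (1 + x ^ 2)) (by positivity),
    integral_one_div_one_add_sq, mul_zero, sub_zero,
    show u - 2 * u / π * (π / 2) = 0 by field_simp; ring, arctan_zero, sub_zero, smul_eq_mul]
  field_simp

theorem hasDerivAt_arctan_mul_tan (k : ℝ) {x : ℝ} (hx : cos x ≠ 0) :
    HasDerivAt (fun y => arctan (k * tan y)) (k / (cos x ^ 2 + k ^ 2 * sin x ^ 2)) x := by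
  refine ((hasDerivAt_arctan _).comp x ((hasDerivAt_tan hx).const_mul k)).congr_deriv ?_
  rw [tan_eq_sin_div_cos]
  field_simp

theorem landen_integrand_eq {a b k φ : ℝ} (hb : 0 < b) (hk : 0 < k) (hab : a = k ^ 2 * b)
    (hφ : cos φ ≠ 0) :
    1 / √(a ^ 2 * cos (arctan (k * tan φ)) ^ 2 + b ^ 2 * sin (arctan (k * tan φ)) ^ 2)
        * (k / (cos φ ^ 2 + k ^ 2 * sin φ ^ 2))
      = 1 / √(a * b + ((a - b) / 2) ^ 2 * sin (2 * φ) ^ 2) := by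
  subst hab
  set D := cos φ ^ 2 + k ^ 2 * sin φ ^ 2
  set R := k ^ 2 * b * b + ((k ^ 2 * b - b) / 2) ^ 2 * sin (2 * φ) ^ 2
  have hD : 0 < D := by simpa using sq_mul_cos_sq_add_sq_mul_sin_sq_pos one_ne_zero hk.ne' φ
  have hR : 0 < R := by positivity
  have hcos : cos (arctan (k * tan φ)) ^ 2 = cos φ ^ 2 / D := by
    rw [cos_sq_arctan, tan_eq_sin_div_cos]
    field_simp
    rfl
  have hsin : sin (arctan (k * tan φ)) ^ 2 = k ^ 2 * sin φ ^ 2 / D := by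
    rw [sin_sq, hcos]
    field_simp
    ring
  have hX : (k ^ 2 * b) ^ 2 * cos (arctan (k * tan φ)) ^ 2 + b ^ 2 * sin (arctan (k * tan φ)) ^ 2
      = (k * √R / D) ^ 2 := by
    rw [hcos, hsin, div_pow, mul_pow k, sq_sqrt hR.le]
    simp only [R, D, sin_two_mul]
    field_simp
    linear_combination k ^ 2 * (sin φ ^ 2 + cos φ ^ 2 + 1) * sin_sq_add_cos_sq φ
  rw [hX, sqrt_sq (by positivity)]
  field_simp

theorem integral_eq_of_eventuallyEq_nhdsLT {f g F : ℝ → ℝ} {a b : ℝ} (hf : Continuous f)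
    (hg : Continuous g) (hF : Tendsto F (𝓝[<] b) (𝓝 b))
    (h : ∀ᶠ c in 𝓝[<] b, ∫ x in a..c, f x = ∫ x in a..F c, g x) :
    ∫ x in a..b, f x = ∫ x in a..b, g x := by
  have hf' : Tendsto (fun c => ∫ x in a..c, f x) (𝓝[<] b) (𝓝 (∫ x in a..b, f x)) :=
    ((continuous_primitive (fun _ _ => hf.intervalIntegrable _ _) a).tendsto b).mono_left
      nhdsWithin_le_nhds
  have hg' : Tendsto (fun c => ∫ x in a..F c, g x) (𝓝[<] b) (𝓝 (∫ x in a..b, g x)) :=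
    ((continuous_primitive (fun _ _ => hg.intervalIntegrable _ _) a).tendsto b).comp hF
  exact tendsto_nhds_unique (hf'.congr' h) hg'

theorem integral_comp_two_mul_of_symm {h : ℝ → ℝ} {L : ℝ} (hh : Continuous h)
    (hsymm : ∀ x, h (2 * L - x) = h x) :
    ∫ x in (0:ℝ)..L, h (2 * x) = ∫ x in (0:ℝ)..L, h x := by
  have hupper : ∫ x in L..2 * L, h x = ∫ x in (0:ℝ)..L, h x := by
    have := integral_comp_sub_left h (2 * L) (a := 0) (b := L)
    rw [show 2 * L - L = L by ring, sub_zero] at this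
    rw [← this]
    simp_rw [hsymm]
  rw [integral_comp_mul_left h two_ne_zero, mul_zero,
    ← integral_add_adjacent_intervals (b := L) (hh.intervalIntegrable _ _)
      (hh.intervalIntegrable _ _), hupper, smul_eq_mul]
  ring

theorem integral_inv_sqrt_landen {a b : ℝ} (ha : 0 < a) (hb : 0 < b) :
    ∫ θ in (0:ℝ)..π / 2, 1 / √(a ^ 2 * cos θ ^ 2 + b ^ 2 * sin θ ^ 2)
      = ∫ ψ in (0:ℝ)..π / 2, 1 / √(a * b + ((a - b) / 2) ^ 2 * sin ψ ^ 2) := by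
  set k := √(a / b)
  have hk : 0 < k := sqrt_pos.2 (div_pos ha hb)
  have hab : a = k ^ 2 * b := by
    rw [sq_sqrt (div_pos ha hb).le]
    field_simp
  set g := fun θ => 1 / √(a ^ 2 * cos θ ^ 2 + b ^ 2 * sin θ ^ 2)
  set h := fun ψ => 1 / √(a * b + ((a - b) / 2) ^ 2 * sin ψ ^ 2)
  have hg : Continuous g := continuous_one_div_sqrt_sq_mul_cos_sq_add_sq_mul_sin_sq ha.ne' hb.ne'
  have hh : Continuous h := continuous_const.div (by fun_prop) fun ψ => by positivity
  have hderiv : Continuous fun x => k / (cos x ^ 2 + k ^ 2 * sin x ^ 2) :=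
    continuous_const.div (by fun_prop) fun x => by
      simpa using (sq_mul_cos_sq_add_sq_mul_sin_sq_pos one_ne_zero hk.ne' x).ne'
  -- `tan θ = k tan φ` breaks down at `φ = π / 2`, hence the limit `c → π / 2` below
  have hsubst : ∀ c ∈ Ioo 0 (π / 2),
      ∫ φ in (0:ℝ)..c, h (2 * φ) = ∫ θ in (0:ℝ)..arctan (k * tan c), g θ := by
    intro c hc
    have hcos : ∀ x ∈ uIcc 0 c, cos x ≠ 0 := fun x hx => by
      rw [uIcc_of_le hc.1.le] at hx
      exact (cos_pos_of_mem_Ioo ⟨by linarith [hx.1, pi_pos], hx.2.trans_lt hc.2⟩).ne'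
    have := integral_comp_mul_deriv (fun x hx => hasDerivAt_arctan_mul_tan k (hcos x hx))
      hderiv.continuousOn hg
    rw [tan_zero, mul_zero, arctan_zero] at this
    rw [← this]
    exact integral_congr fun φ hφ => (landen_integrand_eq hb hk hab (hcos φ hφ)).symm
  have htendsto : Tendsto (fun c => arctan (k * tan c)) (𝓝[<] (π / 2)) (𝓝 (π / 2)) :=
    (tendsto_nhds_of_tendsto_nhdsWithin tendsto_arctan_atTop).comp
      (tendsto_tan_pi_div_two.const_mul_atTop hk)
  calc ∫ θ in (0:ℝ)..π / 2, g θ = ∫ φ in (0:ℝ)..π / 2, h (2 * φ) :=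
        (integral_eq_of_eventuallyEq_nhdsLT (hh.comp (continuous_const_mul 2)) hg htendsto
          (eventually_of_mem (Ioo_mem_nhdsLT pi_div_two_pos) hsubst)).symm
    _ = ∫ ψ in (0:ℝ)..π / 2, h ψ := integral_comp_two_mul_of_symm hh fun x => by
        simp only [h, mul_div_cancel₀ π two_ne_zero, sin_pi_sub]

theorem arsinh_div_le_integral_inv_sqrt {u : ℝ} (hu : 0 < u) :
    π / 2 * arsinh u / (u * √(1 + u ^ 2))
      ≤ ∫ ψ in (0:ℝ)..π / 2, 1 / √(1 + u ^ 2 + (u ^ 2 / 2) ^ 2 * sin ψ ^ 2) := by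
  have hpi : π ^ 2 * u ^ 2 ≤ 16 * (1 + u ^ 2) := by
    have : π ^ 2 ≤ 16 := by nlinarith [pi_lt_four, pi_pos]
    nlinarith [mul_le_mul_of_nonneg_right this (sq_nonneg u)]
  have hrad : ∀ ψ, 1 + u ^ 2 + (u ^ 2 / 2) ^ 2 * sin ψ ^ 2
      ≤ (1 + u ^ 2) * (1 + (2 * u / π * ψ) ^ 2) := fun ψ => by
    have hψ : (u ^ 2 / 2) ^ 2 * sin ψ ^ 2 ≤ (u ^ 2 / 2) ^ 2 * ψ ^ 2 :=
      mul_le_mul_of_nonneg_left sin_sq_le_sq (by positivity)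
    have hconst : (u ^ 2 / 2) ^ 2 * ψ ^ 2 ≤ (1 + u ^ 2) * (2 * u / π * ψ) ^ 2 := by
      have : (1 + u ^ 2) * (2 * u / π * ψ) ^ 2 - (u ^ 2 / 2) ^ 2 * ψ ^ 2
          = u ^ 2 * ψ ^ 2 / (4 * π ^ 2) * (16 * (1 + u ^ 2) - π ^ 2 * u ^ 2) := by
        field_simp
        ring
      rw [← sub_nonneg, this]
      exact mul_nonneg (by positivity) (sub_nonneg.2 hpi)
    nlinarith
  have hminorant : ∀ ψ, (√(1 + u ^ 2))⁻¹ * (1 / √(1 + (2 * u / π * ψ) ^ 2))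
      ≤ 1 / √(1 + u ^ 2 + (u ^ 2 / 2) ^ 2 * sin ψ ^ 2) := fun ψ => by
    rw [one_div, one_div, ← mul_inv, ← sqrt_mul (by positivity)]
    exact inv_anti₀ (by positivity) (sqrt_le_sqrt (hrad ψ))
  calc π / 2 * arsinh u / (u * √(1 + u ^ 2))
      = ∫ ψ in (0:ℝ)..π / 2, (√(1 + u ^ 2))⁻¹ * (1 / √(1 + (2 * u / π * ψ) ^ 2)) := by
        rw [intervalIntegral.integral_const_mul, integral_inv_sqrt_one_add_mul_sq hu]
        field_simp
    _ ≤ _ := integral_mono pi_div_two_pos.le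
        (Continuous.intervalIntegrable (continuous_const.mul (continuous_const.div (by fun_prop)
          fun ψ => by positivity)) _ _)
        (Continuous.intervalIntegrable (continuous_const.div (by fun_prop)
          fun ψ => by positivity) _ _) hminorant

theorem integral_inv_sqrt_le_arctan_div {u : ℝ} (hu : 0 < u) :
    ∫ θ in (0:ℝ)..π / 2, 1 / √((1 + u ^ 2) ^ 2 * cos θ ^ 2 + sin θ ^ 2)
      ≤ π / 2 * arctan u / u := by
  have hmajorant : ∀ θ ∈ Icc 0 (π / 2),
      1 / √((1 + u ^ 2) ^ 2 * cos θ ^ 2 + sin θ ^ 2) ≤ 1 / (1 + (u - 2 * u / π * θ) ^ 2) := by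
    intro θ hθ
    have hjordan : u - 2 * u / π * θ ≤ u * cos θ := by
      have := mul_le_sin (x := π / 2 - θ) (by linarith [hθ.2]) (by linarith [hθ.1])
      rw [sin_pi_div_two_sub] at this
      have hpi := pi_pos
      calc u - 2 * u / π * θ = u * (2 / π * (π / 2 - θ)) := by field_simp
        _ ≤ u * cos θ := by gcongr
    have hnonneg : 0 ≤ u - 2 * u / π * θ := by
      have : 2 * u / π * θ ≤ 2 * u / π * (π / 2) := by gcongr; exact hθ.2
      rw [show 2 * u / π * (π / 2) = u by field_simp] at this
      linarith
    have hconvex : 1 + (u * cos θ) ^ 2 ≤ √((1 + u ^ 2) ^ 2 * cos θ ^ 2 + sin θ ^ 2) := by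
      have := mul_cos_sq_add_mul_sin_sq_le_sqrt (1 + u ^ 2) 1 θ
      simp only [one_pow, one_mul] at this
      convert this using 1
      linear_combination -(sin_sq_add_cos_sq θ)
    exact one_div_le_one_div_of_le (by positivity)
      ((add_le_add le_rfl (pow_le_pow_left₀ hnonneg hjordan 2)).trans hconvex)
  have hcont : Continuous fun θ => 1 / √((1 + u ^ 2) ^ 2 * cos θ ^ 2 + sin θ ^ 2) := by
    simpa using continuous_one_div_sqrt_sq_mul_cos_sq_add_sq_mul_sin_sq
      (a := 1 + u ^ 2) (b := 1) (by positivity) one_ne_zero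
  calc _ ≤ ∫ θ in (0:ℝ)..π / 2, 1 / (1 + (u - 2 * u / π * θ) ^ 2) :=
        integral_mono_on pi_div_two_pos.le
          (hcont.intervalIntegrable _ _)
          (Continuous.intervalIntegrable (continuous_const.div (by fun_prop)
            fun θ => by positivity) _ _) hmajorant
    _ = π / 2 * arctan u / u := by
        rw [integral_inv_one_add_sub_mul_sq hu]
        field_simp

theorem stmt_11 (t : ℝ) (ht : 0 < t) :
    (π / 2) * Real.log ((1 + t ^ 2) ^ ((1:ℝ) / 4) + Real.sqrt (Real.sqrt (1 + t ^ 2) - 1))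
        / Real.sqrt (1 + t ^ 2 - Real.sqrt (1 + t ^ 2))
      ≤ (∫ θ in (0:ℝ)..(π / 2), 1 / Real.sqrt (1 + t ^ 2 * Real.cos θ ^ 2)) ∧
    (∫ θ in (0:ℝ)..(π / 2), 1 / Real.sqrt (1 + t ^ 2 * Real.cos θ ^ 2))
      ≤ (π / 2) * Real.arctan (Real.sqrt (Real.sqrt (1 + t ^ 2) - 1))
          / Real.sqrt (Real.sqrt (1 + t ^ 2) - 1) := by
  set s := √(1 + t ^ 2) with hs_def
  set u := √(s - 1)
  have hs1 : 1 < s := by rw [hs_def, lt_sqrt zero_le_one]; nlinarith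
  have hu : 0 < u := sqrt_pos.2 (by linarith)
  have hs : s = 1 + u ^ 2 := by rw [sq_sqrt (by linarith)]; ring
  have hs2 : s ^ 2 = 1 + t ^ 2 := sq_sqrt (by positivity)
  have hquarter : (1 + t ^ 2) ^ ((1:ℝ) / 4) = √(1 + u ^ 2) := by
    rw [← hs, hs_def, sqrt_eq_rpow, sqrt_eq_rpow, ← rpow_mul (by positivity)]
    norm_num
  have hdenom : √(1 + t ^ 2 - s) = u * √(1 + u ^ 2) := by
    rw [show 1 + t ^ 2 - s = u ^ 2 * (1 + u ^ 2) by rw [← hs2, hs]; ring,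
      sqrt_mul (sq_nonneg u), sqrt_sq hu.le]
  have hintegrand : ∀ θ, 1 + t ^ 2 * cos θ ^ 2 = (1 + u ^ 2) ^ 2 * cos θ ^ 2 + sin θ ^ 2 :=
    fun θ => by rw [← hs, hs2, sin_sq]; ring
  have hlanden := integral_inv_sqrt_landen (a := 1 + u ^ 2) (b := 1) (by positivity) one_pos
  simp only [one_pow, one_mul, mul_one, add_sub_cancel_left] at hlanden
  simp only [hintegrand]
  refine ⟨?_, integral_inv_sqrt_le_arctan_div hu⟩
  rw [hquarter, hdenom, add_comm, ← arsinh, hlanden]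
  exact arsinh_div_le_integral_inv_sqrt hu
end

section
/- For all real numbers a, b with 0 < a < b, one has (π/6)·(2a + b) < ∫₀^{π/2} √(a² sin²θ + b² cos²θ) dθ ≤ (π/6)·(a + 2b). -/
/-!
Both bounds come from comparing the integrand pointwise with trigonometric polynomials whose
integrals over `[0, π/2]` are explicit. From below, Cauchy–Schwarz gives
`a sin² θ + b cos² θ ≤ √(a² sin² θ + b² cos² θ)`, whose integral `π (a + b) / 4` exceeds
`π (2a + b) / 6` exactly when `a < b`. From above, AM–GM `√x ≤ (x + c²) / (2c)` with
`c = (a + 2b) / 3` suffices while `b ≤ 7a`; for flatter ellipses the bound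
`√(a² sin² θ + b² cos² θ) ≤ a sin² θ + b cos θ` integrates to `π a / 4 + b`, which is small
enough as soon as `b ≥ 6a` (using `π > 3.14`).
-/

open Real intervalIntegral

noncomputable def ellipseQuarterArcLength (a b : ℝ) : ℝ :=
  ∫ θ in (0:ℝ)..(π / 2), √(a ^ 2 * sin θ ^ 2 + b ^ 2 * cos θ ^ 2)

lemma mul_sq_add_mul_sq_le_sqrt {a b s c : ℝ} (hsc : s ^ 2 + c ^ 2 = 1) :
    a * s ^ 2 + b * c ^ 2 ≤ √(a ^ 2 * s ^ 2 + b ^ 2 * c ^ 2) := by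
  apply le_sqrt_of_sq_le
  -- `(a²s² + b²c²)(s² + c²) - (a s² + b c²)² = (s c (a - b))²`
  nlinarith [sq_nonneg (s * c * (a - b))]

lemma sqrt_le_mul_sq_add_mul {a b s c : ℝ} (ha : 0 ≤ a) (hab : a ≤ 2 * b) (hc : 0 ≤ c)
    (hsc : s ^ 2 + c ^ 2 = 1) : √(a ^ 2 * s ^ 2 + b ^ 2 * c ^ 2) ≤ a * s ^ 2 + b * c := by
  have hb : 0 ≤ b := by linarith
  have hac : a * c ≤ 2 * b := by nlinarith
  have hcross : a ^ 2 * s ^ 2 * c ^ 2 ≤ 2 * a * b * s ^ 2 * c := by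
    nlinarith [mul_le_mul_of_nonneg_left hac (by positivity : 0 ≤ a * s ^ 2 * c)]
  have hdiff : (a * s ^ 2 + b * c) ^ 2 - (a ^ 2 * s ^ 2 + b ^ 2 * c ^ 2)
      = 2 * a * b * s ^ 2 * c - a ^ 2 * s ^ 2 * c ^ 2 := by
    linear_combination (a ^ 2 * s ^ 2) * hsc
  exact sqrt_le_iff.mpr ⟨by positivity, by linarith⟩

lemma sqrt_le_add_sq_div {x c : ℝ} (hx : 0 ≤ x) (hc : 0 < c) : √x ≤ (x + c ^ 2) / (2 * c) := by
  rw [le_div_iff₀ (by positivity)]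
  nlinarith [two_mul_le_add_sq (√x) c, sq_sqrt hx]

lemma integral_mul_sin_sq_add_mul_cos_sq (p q : ℝ) :
    ∫ θ in (0:ℝ)..(π / 2), (p * sin θ ^ 2 + q * cos θ ^ 2) = (p + q) * (π / 4) := by
  rw [integral_add (Continuous.intervalIntegrable (by fun_prop) _ _)
    (Continuous.intervalIntegrable (by fun_prop) _ _), integral_const_mul, integral_const_mul,
    integral_sin_sq, integral_cos_sq]
  simp only [sin_zero, cos_zero, sin_pi_div_two, cos_pi_div_two]
  ring

lemma integral_mul_sin_sq_add_mul_cos (p q : ℝ) :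
    ∫ θ in (0:ℝ)..(π / 2), (p * sin θ ^ 2 + q * cos θ) = p * (π / 4) + q := by
  rw [integral_add (Continuous.intervalIntegrable (by fun_prop) _ _)
    (Continuous.intervalIntegrable (by fun_prop) _ _), integral_const_mul, integral_const_mul,
    integral_sin_sq, integral_cos]
  simp only [sin_zero, cos_zero, sin_pi_div_two, cos_pi_div_two]
  ring

namespace ellipseQuarterArcLength

variable {a b : ℝ}

lemma intervalIntegrable_integrand (a b : ℝ) :
    IntervalIntegrable (fun θ ↦ √(a ^ 2 * sin θ ^ 2 + b ^ 2 * cos θ ^ 2)) MeasureTheory.volume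
      0 (π / 2) :=
  Continuous.intervalIntegrable (by fun_prop) _ _

lemma le_integral_of_forall_le {g : ℝ → ℝ} (hg : Continuous g)
    (h : ∀ θ ∈ Set.Icc 0 (π / 2), √(a ^ 2 * sin θ ^ 2 + b ^ 2 * cos θ ^ 2) ≤ g θ) :
    ellipseQuarterArcLength a b ≤ ∫ θ in (0:ℝ)..(π / 2), g θ :=
  integral_mono_on (by positivity) (intervalIntegrable_integrand a b) (hg.intervalIntegrable _ _) h

lemma add_mul_pi_div_four_le (a b : ℝ) :
    (a + b) * (π / 4) ≤ ellipseQuarterArcLength a b := by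
  rw [← integral_mul_sin_sq_add_mul_cos_sq]
  exact integral_mono_on (by positivity) (Continuous.intervalIntegrable (by fun_prop) _ _)
    (intervalIntegrable_integrand a b)
    fun θ _ ↦ mul_sq_add_mul_sq_le_sqrt (sin_sq_add_cos_sq θ)

lemma le_pi_div_four_mul {c : ℝ} (hc : 0 < c) :
    ellipseQuarterArcLength a b ≤ π / 4 * ((a ^ 2 + b ^ 2) / (2 * c) + c) := by
  calc ellipseQuarterArcLength a b
      ≤ ∫ θ in (0:ℝ)..(π / 2), ((a ^ 2 / (2 * c)) * sin θ ^ 2 + (b ^ 2 / (2 * c)) * cos θ ^ 2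
          + c / 2) := by
        refine le_integral_of_forall_le (by fun_prop) fun θ _ ↦ ?_
        calc √(a ^ 2 * sin θ ^ 2 + b ^ 2 * cos θ ^ 2)
            ≤ (a ^ 2 * sin θ ^ 2 + b ^ 2 * cos θ ^ 2 + c ^ 2) / (2 * c) :=
              sqrt_le_add_sq_div (by positivity) hc
          _ = _ := by field_simp
    _ = π / 4 * ((a ^ 2 + b ^ 2) / (2 * c) + c) := by
        rw [integral_add (Continuous.intervalIntegrable (by fun_prop) _ _)
          (Continuous.intervalIntegrable (by fun_prop) _ _), integral_mul_sin_sq_add_mul_cos_sq,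
          integral_const, smul_eq_mul]
        ring

lemma le_mul_pi_div_four_add (ha : 0 ≤ a) (hab : a ≤ 2 * b) :
    ellipseQuarterArcLength a b ≤ a * (π / 4) + b := by
  rw [← integral_mul_sin_sq_add_mul_cos]
  refine le_integral_of_forall_le (by fun_prop) fun θ hθ ↦ ?_
  have hcos : 0 ≤ cos θ := cos_nonneg_of_mem_Icc ⟨by linarith [hθ.1, pi_pos], hθ.2⟩
  exact sqrt_le_mul_sq_add_mul ha hab hcos (sin_sq_add_cos_sq θ)

lemma le_of_le_of_le_seven_mul (ha : 0 < a) (hab : a ≤ b) (hb : b ≤ 7 * a) :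
    ellipseQuarterArcLength a b ≤ π / 6 * (a + 2 * b) := by
  set c := (a + 2 * b) / 3 with hc_def
  have hc : 0 < c := by linarith
  -- `2c² - (a² + b²) = 2 (7a - b)(b - a) / 9`
  have hsum : (a ^ 2 + b ^ 2) / (2 * c) ≤ c := by
    rw [div_le_iff₀ (by linarith), hc_def]
    nlinarith
  calc ellipseQuarterArcLength a b ≤ π / 4 * ((a ^ 2 + b ^ 2) / (2 * c) + c) :=
        le_pi_div_four_mul hc
    _ ≤ π / 4 * (c + c) := by gcongr
    _ = π / 6 * (a + 2 * b) := by ring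

lemma le_of_six_mul_le (ha : 0 ≤ a) (hb : 6 * a ≤ b) :
    ellipseQuarterArcLength a b ≤ π / 6 * (a + 2 * b) :=
  -- `a π / 4 + b ≤ π (a + 2b) / 6` once `b / a ≥ π / (4 (π - 3))`, which is about `5.55`
  (le_mul_pi_div_four_add ha (by linarith)).trans (by nlinarith [pi_gt_d2])

end ellipseQuarterArcLength

theorem stmt_12 (a b : ℝ) (ha : 0 < a) (hab : a < b) :
    (π / 6) * (2 * a + b)
      < (∫ θ in (0:ℝ)..(π / 2), Real.sqrt (a ^ 2 * Real.sin θ ^ 2 + b ^ 2 * Real.cos θ ^ 2)) ∧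
    (∫ θ in (0:ℝ)..(π / 2), Real.sqrt (a ^ 2 * Real.sin θ ^ 2 + b ^ 2 * Real.cos θ ^ 2))
      ≤ (π / 6) * (a + 2 * b) := by
  change _ < ellipseQuarterArcLength a b ∧ ellipseQuarterArcLength a b ≤ _
  constructor
  · calc π / 6 * (2 * a + b) < (a + b) * (π / 4) := by nlinarith [pi_pos]
      _ ≤ ellipseQuarterArcLength a b := ellipseQuarterArcLength.add_mul_pi_div_four_le a b
  · rcases le_total b (6 * a) with hb | hb
    · exact ellipseQuarterArcLength.le_of_le_of_le_seven_mul ha hab.le (by linarith)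
    · exact ellipseQuarterArcLength.le_of_six_mul_le ha.le hb
end

section
/- For all real numbers a, b with a > 0 and b ≥ 7a, one has (π/6)·(a + 2b) ≤ (π/4)·√(2(a² + b²)). -/
open Real

theorem two_thirds_mul_le_sqrt_two_mul_sq_add_sq {a b : ℝ} (h : 0 ≤ (b - a) * (b - 7 * a)) :
    2 / 3 * (a + 2 * b) ≤ √(2 * (a ^ 2 + b ^ 2)) := by
  refine (le_abs_self _).trans (Real.abs_le_sqrt ?_)
  have gap : 2 * (a ^ 2 + b ^ 2) - (2 / 3 * (a + 2 * b)) ^ 2 = 2 / 9 * ((b - a) * (b - 7 * a)) := by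
    ring
  linarith

theorem stmt_13 (a b : ℝ) (ha : 0 < a) (hb : 7 * a ≤ b) :
    (π / 6) * (a + 2 * b) ≤ (π / 4) * Real.sqrt (2 * (a ^ 2 + b ^ 2)) := by
  have hba : 0 ≤ b - a := by linarith
  have hb7a : 0 ≤ b - 7 * a := by linarith
  calc π / 6 * (a + 2 * b) = π / 4 * (2 / 3 * (a + 2 * b)) := by ring
    _ ≤ π / 4 * √(2 * (a ^ 2 + b ^ 2)) := by
      gcongr
      exact two_thirds_mul_le_sqrt_two_mul_sq_add_sq (mul_nonneg hba hb7a)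
end

section
/- For all real x with 0 ≤ x ≤ 1, one has 1/√(4 − x² − x³) ≥ 1/2 + ((√2 − 1)/2)·x⁴ + (11√2/8 − 2)·(1 − x)·x³. -/
/-!
Write `R x` for the right-hand side. Both sides agree to first order at `x = 0` (value `1/2`)
and at `x = 1` (value `1/√2`), and indeed `1 - R(x)² (4 - x² - x³) = x² (1 - x)² E(x)` for a
degree-7 polynomial `E` whose coefficients, once `√2` is pinned between `1.41` and `1.44`, are
all positive. Hence `R(x)² (4 - x² - x³) ≤ 1` for `x ≥ 0`, which is the claim since
`4 - x² - x³ > 0` on `[0, 1]`.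
-/

open Real

lemma le_one_div_sqrt_of_sq_mul_le_one {r y : ℝ} (hy : 0 < y) (h : r ^ 2 * y ≤ 1) :
    r ≤ 1 / √y := by
  calc r ≤ |r| := le_abs_self r
    _ ≤ √(1 / y) := abs_le_sqrt ((le_div_iff₀ hy).mpr h)
    _ = 1 / √y := by rw [one_div, sqrt_inv, one_div]

lemma sqrt_two_mem_Icc : √2 ∈ Set.Icc (1.41 : ℝ) 1.44 := by
  constructor
  · rw [le_sqrt (by norm_num) (by norm_num)]; norm_num
  · rw [sqrt_le_left (by norm_num)]; norm_num

namespace InvSqrtBound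

noncomputable def lowerBound (x : ℝ) : ℝ :=
  1 / 2 + ((√2 - 1) / 2) * x ^ 4 + (11 * √2 / 8 - 2) * (1 - x) * x ^ 3

noncomputable def defect (x : ℝ) : ℝ :=
  1 / 4 + (35 / 4 - 11 / 2 * √2) * x + (45 / 4 - 15 / 2 * √2) * x ^ 2
    + (47 / 4 - 65 / 8 * √2) * x ^ 3 + (-155 / 8 + 55 / 4 * √2) * x ^ 4
    + (-23 / 4 + 17 / 4 * √2) * x ^ 5 + (17 / 32 - 1 / 4 * √2) * x ^ 6
    + (121 / 32 - 21 / 8 * √2) * x ^ 7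

lemma one_sub_lowerBound_sq_mul (x : ℝ) :
    1 - lowerBound x ^ 2 * (4 - x ^ 2 - x ^ 3) = x ^ 2 * (1 - x) ^ 2 * defect x := by
  have hs : √2 ^ 2 = 2 := sq_sqrt (by norm_num)
  unfold lowerBound defect
  linear_combination (-121 / 16 * x ^ 6 + 77 / 8 * x ^ 7 - 75 / 64 * x ^ 8 - 33 / 64 * x ^ 9
    - 105 / 64 * x ^ 10 + 49 / 64 * x ^ 11) * hs

lemma defect_nonneg {x : ℝ} (hx : 0 ≤ x) : 0 ≤ defect x := by
  obtain ⟨hs₁, hs₂⟩ := sqrt_two_mem_Icc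
  have c₁ : 0 ≤ 35 / 4 - 11 / 2 * √2 := by linarith
  have c₂ : 0 ≤ 45 / 4 - 15 / 2 * √2 := by linarith
  have c₃ : 0 ≤ 47 / 4 - 65 / 8 * √2 := by linarith
  have c₄ : 0 ≤ -155 / 8 + 55 / 4 * √2 := by linarith
  have c₅ : 0 ≤ -23 / 4 + 17 / 4 * √2 := by linarith
  have c₆ : 0 ≤ 17 / 32 - 1 / 4 * √2 := by linarith
  have c₇ : 0 ≤ 121 / 32 - 21 / 8 * √2 := by linarith
  unfold defect
  linarith [mul_nonneg c₁ hx, mul_nonneg c₂ (pow_nonneg hx 2), mul_nonneg c₃ (pow_nonneg hx 3),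
    mul_nonneg c₄ (pow_nonneg hx 4), mul_nonneg c₅ (pow_nonneg hx 5),
    mul_nonneg c₆ (pow_nonneg hx 6), mul_nonneg c₇ (pow_nonneg hx 7)]

lemma lowerBound_sq_mul_le_one {x : ℝ} (hx : 0 ≤ x) :
    lowerBound x ^ 2 * (4 - x ^ 2 - x ^ 3) ≤ 1 := by
  have := one_sub_lowerBound_sq_mul x
  have : 0 ≤ x ^ 2 * (1 - x) ^ 2 * defect x := mul_nonneg (by positivity) (defect_nonneg hx)
  linarith

end InvSqrtBound

open InvSqrtBound in
theorem stmt_15 (x : ℝ) (hx0 : 0 ≤ x) (hx1 : x ≤ 1) :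
    1 / Real.sqrt (4 - x ^ 2 - x ^ 3)
      ≥ 1 / 2 + ((Real.sqrt 2 - 1) / 2) * x ^ 4
          + (11 * Real.sqrt 2 / 8 - 2) * (1 - x) * x ^ 3 := by
  have hpos : 0 < 4 - x ^ 2 - x ^ 3 := by
    have : x ^ 3 ≤ 1 := pow_le_one₀ hx0 hx1
    nlinarith
  exact le_one_div_sqrt_of_sq_mul_le_one hpos (lowerBound_sq_mul_le_one hx0)
end

section
/- One has ∫₀¹ dx/√(4 − x² − x³) > 3/10 + 27√2/160. -/
/-! The function `s ↦ 1 / √s` is convex, so it lies above its tangent line at any `b ^ 2 > 0`,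
namely `s ↦ (3 b ^ 2 - s) / (2 b ^ 3)`. Integrating this bound with `s = 4 - x ^ 2 - x ^ 3` turns
the integral into one of a polynomial, and the tangency point `b ^ 2 = 32 / 9` (where
`x ^ 2 + x ^ 3 = 4 / 9`) gives `783 √2 / 2048`, which beats
`3 / 10 + 27 √2 / 160` as soon as `√2 > 1.41`. -/

open Real

theorem one_div_sqrt_ge_tangent {b s : ℝ} (hb : 0 < b) (hs : 0 < s) :
    (3 * b ^ 2 - s) / (2 * b ^ 3) ≤ 1 / √s := by
  have hsqrt_pos : 0 < √s := sqrt_pos.mpr hs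
  have hsq : √s ^ 2 = s := sq_sqrt hs.le
  rw [div_le_div_iff₀ (by positivity) hsqrt_pos]
  -- `2 b³ - 3 b² a + a³ = (a - b)² (a + 2b)` with `a = √s`
  nlinarith [mul_nonneg (sq_nonneg (√s - b)) (by positivity : (0:ℝ) ≤ √s + 2 * b)]

theorem integral_tangent_le_integral_one_div_sqrt {f : ℝ → ℝ} {a c b : ℝ} (hac : a ≤ c)
    (hf : ContinuousOn f (Set.Icc a c)) (hf_pos : ∀ x ∈ Set.Icc a c, 0 < f x) (hb : 0 < b) :
    ∫ x in a..c, (3 * b ^ 2 - f x) / (2 * b ^ 3) ≤ ∫ x in a..c, 1 / √(f x) := by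
  rw [← Set.uIcc_of_le hac] at hf hf_pos
  refine intervalIntegral.integral_mono_on hac ?_ ?_ fun x hx ↦ ?_
  · exact ((continuousOn_const.sub hf).div_const _).intervalIntegrable
  · refine (continuousOn_const.div (continuous_sqrt.comp_continuousOn hf) ?_).intervalIntegrable
    exact fun x hx ↦ (sqrt_pos.mpr (hf_pos x hx)).ne'
  · exact one_div_sqrt_ge_tangent hb (hf_pos x (Set.Icc_subset_uIcc hx))

theorem integral_tangent_four_sub_sq_sub_cube (b : ℝ) :
    ∫ x in (0:ℝ)..1, (3 * b ^ 2 - (4 - x ^ 2 - x ^ 3)) / (2 * b ^ 3)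
      = (3 * b ^ 2 - 41 / 12) / (2 * b ^ 3) := by
  rw [intervalIntegral.integral_div, intervalIntegral.integral_sub, intervalIntegral.integral_sub]
  all_goals try exact (by fun_prop : Continuous _).intervalIntegrable _ _
  simp [integral_pow]
  ring

theorem stmt_16 :
    (∫ x in (0:ℝ)..1, 1 / Real.sqrt (4 - x ^ 2 - x ^ 3))
      > 3 / 10 + 27 * Real.sqrt 2 / 160 := by
  set b : ℝ := 4 * √2 / 3
  have hsqrt2 : √2 ^ 2 = 2 := sq_sqrt (by norm_num)
  have hsqrt2_gt : (1.41 : ℝ) < √2 := by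
    rw [lt_sqrt (by norm_num)]
    norm_num
  have hb : 0 < b := by positivity
  have hpos : ∀ x ∈ Set.Icc (0:ℝ) 1, 0 < 4 - x ^ 2 - x ^ 3 := by
    rintro x ⟨hx0, hx1⟩
    nlinarith [pow_le_one₀ hx0 hx1 (n := 2), pow_le_one₀ hx0 hx1 (n := 3)]
  have hlower := integral_tangent_le_integral_one_div_sqrt zero_le_one
    (by fun_prop) hpos hb
  rw [integral_tangent_four_sub_sq_sub_cube] at hlower
  refine lt_of_lt_of_le ?_ hlower
  have hb2 : b ^ 2 = 32 / 9 := by simp only [b]; rw [div_pow, mul_pow, hsqrt2]; norm_num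
  have hb3 : b ^ 3 = 128 * √2 / 27 := by rw [pow_succ, hb2]; ring
  rw [hb2, hb3, lt_div_iff₀ (by positivity)]
  nlinarith
end

section
/- For all real x with 0 ≤ x ≤ 1, one has 1/√(4 − x² − x³) ≤ 1/2 + ((√2 − 1)/2)·x² + ((5 − 4√2)/8)·x²·(1 − x)·((8√2 − 9)/(8√2 − 10) + x). -/
/-!
Write `q = 4 - x² - x³` and `R` for the right-hand side. Since `q > 0` and `R ≥ 0` on `[0, 1]`,
the inequality is equivalent to `R² q ≥ 1`. Rationalising the constant
`(8√2 - 9)/(8√2 - 10) = (19 + 4√2)/14` makes `R² q - 1` a polynomial in `x` over `ℚ(√2)`, and it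
factors as `x⁴ (1 - x) G(x)` where every coefficient of `G = cofactor` is a positive element of `ℚ(√2)`.
-/

open Real

lemma one_div_sqrt_le_of_one_le_sq_mul {q r : ℝ} (hq : 0 < q) (hr : 0 ≤ r)
    (h : 1 ≤ r ^ 2 * q) : 1 / √q ≤ r := by
  rw [div_le_iff₀ (sqrt_pos.2 hq), ← sqrt_sq hr, ← sqrt_mul (sq_nonneg _)]
  exact one_le_sqrt.2 h

lemma sqrt_two_bounds : 1.41 < √2 ∧ √2 < 1.42 :=
  ⟨lt_sqrt (by norm_num) |>.2 (by norm_num), (sqrt_lt' (by norm_num)).2 (by norm_num)⟩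

lemma div_sqrt_two_eq : (8 * √2 - 9) / (8 * √2 - 10) = (19 + 4 * √2) / 14 := by
  have hs : √2 ^ 2 = 2 := sq_sqrt zero_le_two
  have hden : 8 * √2 - 10 ≠ 0 := by nlinarith [sqrt_two_bounds]
  rw [div_eq_div_iff hden (by norm_num)]
  linear_combination (-32) * hs

noncomputable def majorant (x : ℝ) : ℝ :=
  1 / 2 + ((√2 - 1) / 2) * x ^ 2 + ((5 - 4 * √2) / 8) * x ^ 2 * (1 - x) * ((19 + 4 * √2) / 14 + x)

noncomputable def cofactor (x : ℝ) : ℝ :=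
  (2 * √2 - 163/64) + (2 * √2 - 169/64) * x + (7/4 * √2 - 609/256) * x ^ 2
    + (3/2 * √2 - 133/64) * x ^ 3 + (397/256 - 17/16 * √2) * x ^ 4
    + (109/64 - 19/16 * √2) * x ^ 5 + (57/64 - 5/8 * √2) * x ^ 6

lemma majorant_sq_mul_sub_one (x : ℝ) :
    majorant x ^ 2 * (4 - x ^ 2 - x ^ 3) - 1 = x ^ 4 * (1 - x) * cofactor x := by
  have hs : √2 ^ 2 = 2 := sq_sqrt zero_le_two
  unfold majorant cofactor
  linear_combination ((-4/7)*x^2 + (4/7)*x^3 + (-9/98)*x^4 + (4/49)*x^4*√2^2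
    + (16/49)*x^5 + (-8/49)*x^5*√2^2 + (211/392)*x^6 + (-4/7)*x^6*√2 + (3/49)*x^6*√2^2
    + (-289/392)*x^7 + (4/7)*x^7*√2 + (1/49)*x^7*√2^2 + (299/392)*x^8 + (1/7)*x^8*√2
    + (1/49)*x^8*√2^2 + (9/392)*x^9 + (-1/49)*x^9*√2^2 + (-1/14)*x^10 + (-1/7)*x^10*√2
    + (-1/4)*x^11) * hs

lemma cofactor_nonneg {x : ℝ} (hx : 0 ≤ x) : 0 ≤ cofactor x := by
  obtain ⟨hlo, hhi⟩ := sqrt_two_bounds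
  unfold cofactor
  linarith [mul_nonneg (by linarith : (0 : ℝ) ≤ 2 * √2 - 169/64) hx,
    mul_nonneg (by linarith : (0 : ℝ) ≤ 7/4 * √2 - 609/256) (pow_nonneg hx 2),
    mul_nonneg (by linarith : (0 : ℝ) ≤ 3/2 * √2 - 133/64) (pow_nonneg hx 3),
    mul_nonneg (by linarith : (0 : ℝ) ≤ 397/256 - 17/16 * √2) (pow_nonneg hx 4),
    mul_nonneg (by linarith : (0 : ℝ) ≤ 109/64 - 19/16 * √2) (pow_nonneg hx 5),
    mul_nonneg (by linarith : (0 : ℝ) ≤ 57/64 - 5/8 * √2) (pow_nonneg hx 6)]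

lemma one_le_majorant_sq_mul {x : ℝ} (hx0 : 0 ≤ x) (hx1 : x ≤ 1) :
    1 ≤ majorant x ^ 2 * (4 - x ^ 2 - x ^ 3) := by
  rw [← sub_nonneg, majorant_sq_mul_sub_one]
  exact mul_nonneg (mul_nonneg (by positivity) (sub_nonneg.2 hx1)) (cofactor_nonneg hx0)

lemma majorant_nonneg {x : ℝ} (hx0 : 0 ≤ x) : 0 ≤ majorant x := by
  obtain ⟨hlo, hhi⟩ := sqrt_two_bounds
  -- `(1 - x) (c + x) = c - (c - 1) x - x²` with `c > 1`.
  have hprod : (1 - x) * ((19 + 4 * √2) / 14 + x) ≤ (19 + 4 * √2) / 14 := by nlinarith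
  have hs : √2 ^ 2 = 2 := sq_sqrt zero_le_two
  have hcoef : 0 ≤ (4 * √2 - 5) / 8 * x ^ 2 := mul_nonneg (by linarith) (sq_nonneg x)
  unfold majorant
  nlinarith [mul_le_mul_of_nonneg_left hprod hcoef, sq_nonneg x]

theorem stmt_17 (x : ℝ) (hx0 : 0 ≤ x) (hx1 : x ≤ 1) :
    1 / Real.sqrt (4 - x ^ 2 - x ^ 3)
      ≤ 1 / 2 + ((Real.sqrt 2 - 1) / 2) * x ^ 2
          + ((5 - 4 * Real.sqrt 2) / 8) * x ^ 2 * (1 - x)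
              * ((8 * Real.sqrt 2 - 9) / (8 * Real.sqrt 2 - 10) + x) := by
  rw [div_sqrt_two_eq]
  have hq : 0 < 4 - x ^ 2 - x ^ 3 := by nlinarith [pow_le_one₀ hx0 hx1 (n := 3)]
  exact one_div_sqrt_le_of_one_le_sq_mul hq (majorant_nonneg hx0)
    (one_le_majorant_sq_mul hx0 hx1)
end

section
/- One has ∫₀¹ dx/√(4 − x² − x³) < 79/192 + √2/10. -/
/-!
Write `t = x² + x³ ∈ [0, 2]`. The first terms of the binomial series of `(4 - t)^(-1/2)` are
`1/2 + t/16 + 3t²/256 + ⋯`; all coefficients are positive, so raising the `t²` coefficient to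
`1/48 ≥ (1/√2 - 5/8)/4` gives a majorant on `[0, 2]` that is nearly tight at `t = 2`. Integrating it
over `x ∈ [0, 1]` gives `11099/20160 ≈ 0.55055`, below `79/192 + 1.4/10 ≈ 0.55146`.
-/

open Real

lemma one_div_sqrt_le_of_one_le_sq_mul_s18 {a p : ℝ} (hp : 0 ≤ p) (h : 1 ≤ p ^ 2 * a) :
    1 / √a ≤ p := by
  have ha : 0 < a := pos_of_mul_pos_right (one_pos.trans_le h) (sq_nonneg p)
  rw [one_div, ← sqrt_inv, sqrt_le_iff, inv_le_iff_one_le_mul₀ ha]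
  exact ⟨hp, h⟩

lemma one_div_sqrt_four_sub_le {t : ℝ} (ht : t ≤ 2) :
    1 / √(4 - t) ≤ 1 / 2 + t / 16 + t ^ 2 / 48 := by
  have hpos : 0 ≤ 1 / 2 + t / 16 + t ^ 2 / 48 := by nlinarith [sq_nonneg (t + 3 / 2)]
  refine one_div_sqrt_le_of_one_le_sq_mul_s18 hpos ?_
  have key : (1 / 2 + t / 16 + t ^ 2 / 48) ^ 2 * (4 - t) - 1
      = t ^ 2 * ((2 - t) * ((t + 2) ^ 2 + 37) + 2) / 2304 := by ring
  have : 0 ≤ t ^ 2 * ((2 - t) * ((t + 2) ^ 2 + 37) + 2) / 2304 := by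
    have : 0 ≤ 2 - t := by linarith
    positivity
  linarith

lemma integral_majorant :
    ∫ x in (0:ℝ)..1, (1 / 2 + (x ^ 2 + x ^ 3) / 16 + (x ^ 2 + x ^ 3) ^ 2 / 48)
      = 11099 / 20160 := by
  have hderiv : ∀ x ∈ Set.uIcc (0:ℝ) 1,
      HasDerivAt (fun x : ℝ => x / 2 + (x ^ 3 / 3 + x ^ 4 / 4) / 16
          + (x ^ 5 / 5 + x ^ 6 / 3 + x ^ 7 / 7) / 48)
        (1 / 2 + (x ^ 2 + x ^ 3) / 16 + (x ^ 2 + x ^ 3) ^ 2 / 48) x := by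
    intro x _
    refine ((((hasDerivAt_id x).div_const 2).add
      ((((hasDerivAt_pow 3 x).div_const 3).add ((hasDerivAt_pow 4 x).div_const 4)).div_const 16)).add
      (((((hasDerivAt_pow 5 x).div_const 5).add ((hasDerivAt_pow 6 x).div_const 3)).add
        ((hasDerivAt_pow 7 x).div_const 7)).div_const 48)).congr_deriv ?_
    push_cast
    ring
  rw [intervalIntegral.integral_eq_sub_of_hasDerivAt hderiv
    (by apply Continuous.intervalIntegrable; fun_prop)]
  norm_num

lemma continuousOn_one_div_sqrt_four_sub :
    ContinuousOn (fun x : ℝ => 1 / √(4 - x ^ 2 - x ^ 3)) (Set.Icc 0 1) := by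
  refine continuousOn_const.div (by fun_prop) fun x ⟨hx0, hx1⟩ => ?_
  exact (sqrt_pos.2 (by nlinarith)).ne'

theorem stmt_18 :
    (∫ x in (0:ℝ)..1, 1 / Real.sqrt (4 - x ^ 2 - x ^ 3))
      < 79 / 192 + Real.sqrt 2 / 10 := by
  have hbound : ∀ x ∈ Set.Icc (0:ℝ) 1, 1 / √(4 - x ^ 2 - x ^ 3)
      ≤ 1 / 2 + (x ^ 2 + x ^ 3) / 16 + (x ^ 2 + x ^ 3) ^ 2 / 48 := by
    rintro x ⟨hx0, hx1⟩
    rw [sub_sub]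
    exact one_div_sqrt_four_sub_le (by nlinarith [pow_le_one₀ hx0 hx1 (n := 2)])
  have hsqrt2 : (1.4:ℝ) < √2 := (lt_sqrt (by norm_num)).2 (by norm_num)
  calc (∫ x in (0:ℝ)..1, 1 / √(4 - x ^ 2 - x ^ 3))
      ≤ ∫ x in (0:ℝ)..1, (1 / 2 + (x ^ 2 + x ^ 3) / 16 + (x ^ 2 + x ^ 3) ^ 2 / 48) :=
        intervalIntegral.integral_mono_on zero_le_one
          (continuousOn_one_div_sqrt_four_sub.intervalIntegrable_of_Icc zero_le_one)
          (by apply Continuous.intervalIntegrable; fun_prop) hbound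
    _ = 11099 / 20160 := integral_majorant
    _ < 79 / 192 + √2 / 10 := by linarith
end

section
/- For all real t with 0 < t < 1, one has (π·arcsin t)/(2t) < F(t) < (π/(4t))·ln((1+t)/(1−t)). -/
/-!
Take the binomial series `1/√(1 - x) = ∑ wₙ xⁿ`, `wₙ = ∏_{i<n} (2i+1)/(2i+2)`, and integrate it
termwise at `x = t² sin² θ` over `[0, π/2]`, using `∫₀^{π/2} sin^{2n} = (π/2) wₙ`, and at `x = s²`
over `[0, t]`, where it integrates to `arcsin t`. This gives
`F(t) = (π/2) ∑ wₙ² t^{2n}` and `π arcsin t / (2t) = (π/2) ∑ wₙ/(2n+1) t^{2n}`, while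
`(π/(4t)) log((1+t)/(1-t)) = (π/2) ∑ t^{2n}/(2n+1)`.
The series compare coefficientwise since `1/(2n+1) ≤ wₙ ≤ 1/√(2n+1)`, strictly at `n = 1`.
-/

open Real Finset MeasureTheory

noncomputable def wallisCoeff (n : ℕ) : ℝ := ∏ i ∈ range n, (2 * (i : ℝ) + 1) / (2 * i + 2)

lemma wallisCoeff_succ (n : ℕ) :
    wallisCoeff (n + 1) = wallisCoeff n * ((2 * n + 1) / (2 * n + 2)) :=
  prod_range_succ _ n

lemma wallisCoeff_one : wallisCoeff 1 = 1 / 2 := by norm_num [wallisCoeff]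

lemma wallisCoeff_pos (n : ℕ) : 0 < wallisCoeff n :=
  prod_pos fun _ _ => by positivity

lemma wallisCoeff_le_one (n : ℕ) : wallisCoeff n ≤ 1 :=
  prod_le_one (fun _ _ => by positivity) fun i _ => (div_le_one (by positivity)).2 (by linarith)

lemma one_div_le_wallisCoeff (n : ℕ) : 1 / (2 * n + 1 : ℝ) ≤ wallisCoeff n := by
  induction n with
  | zero => simp [wallisCoeff]
  | succ n ih =>
    calc 1 / (2 * (n + 1 : ℕ) + 1 : ℝ)
        ≤ 1 / (2 * n + 2) := one_div_le_one_div_of_le (by positivity) (by push_cast; linarith)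
      _ = 1 / (2 * n + 1) * ((2 * n + 1) / (2 * n + 2)) := by field_simp
      _ ≤ wallisCoeff (n + 1) := by rw [wallisCoeff_succ]; gcongr

lemma wallisCoeff_div_le_sq (n : ℕ) : wallisCoeff n / (2 * n + 1) ≤ wallisCoeff n ^ 2 := by
  rw [div_eq_mul_one_div, sq]
  exact mul_le_mul_of_nonneg_left (one_div_le_wallisCoeff n) (wallisCoeff_pos n).le

lemma wallisCoeff_sq_le (n : ℕ) : wallisCoeff n ^ 2 ≤ 1 / (2 * n + 1) := by
  rw [le_div_iff₀ (by positivity)]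
  induction n with
  | zero => simp [wallisCoeff]
  | succ n ih =>
    have hstep : (2 * n + 1 : ℝ) * (2 * n + 3) / (2 * n + 2) ^ 2 ≤ 1 := by
      rw [div_le_one (by positivity)]
      nlinarith
    calc wallisCoeff (n + 1) ^ 2 * (2 * (n + 1 : ℕ) + 1)
        = wallisCoeff n ^ 2 * (2 * n + 1) * ((2 * n + 1) * (2 * n + 3) / (2 * n + 2) ^ 2) := by
          rw [wallisCoeff_succ]
          push_cast
          field_simp
          ring
      _ ≤ 1 := mul_le_one₀ ih (by positivity) hstep

open Polynomial in
lemma wallisCoeff_eq_choose (n : ℕ) : wallisCoeff n = Ring.choose ((1 / 2 : ℝ) + n - 1) n := by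
  rw [Ring.choose_eq_smul, ← aeval_eq_smeval, ← eval_map_algebraMap, descPochhammer_map,
    descPochhammer_eval_eq_prod_range, smul_eq_mul, ← prod_range_reflect,
    ← prod_range_add_one_eq_factorial, Nat.cast_prod, ← prod_inv_distrib, ← prod_mul_distrib,
    wallisCoeff]
  refine prod_congr rfl fun i hi => ?_
  rw [Nat.sub_sub, Nat.cast_sub (by simpa [add_comm] using hi)]
  push_cast
  field_simp
  ring

theorem hasSum_wallisCoeff_mul_pow {x : ℝ} (hx : |x| < 1) :
    HasSum (fun n => wallisCoeff n * x ^ n) (1 / √(1 - x)) := by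
  have := (one_div_one_sub_rpow_hasFPowerSeriesOnBall_zero (1 / 2)).hasSum
    (y := x) (by simpa [enorm_eq_nnnorm, ← NNReal.coe_lt_one] using hx)
  rw [zero_add, ← sqrt_eq_rpow] at this
  simpa only [FormalMultilinearSeries.ofScalars_apply_eq, ← wallisCoeff_eq_choose,
    smul_eq_mul] using this

theorem integral_sin_pow_even_pi_div_two (n : ℕ) :
    ∫ x in (0 : ℝ)..π / 2, sin x ^ (2 * n) = π / 2 * wallisCoeff n := by
  have hsymm : ∫ x in π / 2..π, sin x ^ (2 * n) = ∫ x in (0 : ℝ)..π / 2, sin x ^ (2 * n) := by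
    simpa [sin_pi_sub, sub_half] using
      (intervalIntegral.integral_comp_sub_left (fun x => sin x ^ (2 * n)) π
        (a := 0) (b := π / 2)).symm
  have hint (a b : ℝ) : IntervalIntegrable (fun x => sin x ^ (2 * n)) volume a b :=
    (continuous_sin.pow _).intervalIntegrable a b
  have := intervalIntegral.integral_add_adjacent_intervals (hint 0 (π / 2)) (hint (π / 2) π)
  rw [hsymm, integral_sin_pow_even] at this
  rw [wallisCoeff]
  linarith

theorem hasSum_intervalIntegral_of_nonneg {a b : ℝ} (hab : a ≤ b) {F : ℕ → ℝ → ℝ} {g : ℝ → ℝ}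
    (hF : ∀ n, IntervalIntegrable (F n) volume a b) (hF_nonneg : ∀ n x, 0 ≤ F n x)
    (hF_sum : Summable fun n => ∫ x in a..b, F n x)
    (hg : ∀ x ∈ Set.Ioc a b, HasSum (fun n => F n x) (g x)) :
    HasSum (fun n => ∫ x in a..b, F n x) (∫ x in a..b, g x) := by
  simp only [intervalIntegral.integral_of_le hab] at hF_sum ⊢
  rw [setIntegral_congr_fun measurableSet_Ioc fun x hx => (hg x hx).tsum_eq.symm]
  refine hasSum_integral_of_summable_integral_norm (fun n => (hF n).1) ?_
  simpa only [Real.norm_of_nonneg (hF_nonneg _ _)] using hF_sum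

noncomputable def ellipticK (t : ℝ) : ℝ := ∫ θ in (0 : ℝ)..π / 2, 1 / √(1 - t ^ 2 * sin θ ^ 2)

theorem hasSum_ellipticK {t : ℝ} (ht : |t| < 1) :
    HasSum (fun n => π / 2 * (wallisCoeff n ^ 2 * (t ^ 2) ^ n)) (ellipticK t) := by
  have ht2 : t ^ 2 < 1 := by rwa [sq_lt_one_iff_abs_lt_one]
  have hterm (n : ℕ) : ∫ θ in (0 : ℝ)..π / 2, wallisCoeff n * (t ^ 2 * sin θ ^ 2) ^ n
      = π / 2 * (wallisCoeff n ^ 2 * (t ^ 2) ^ n) := by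
    simp_rw [mul_pow, ← pow_mul, ← mul_assoc]
    rw [intervalIntegral.integral_const_mul, integral_sin_pow_even_pi_div_two]
    ring
  simp_rw [← hterm]
  refine hasSum_intervalIntegral_of_nonneg (by positivity)
    (fun n => (by fun_prop : Continuous _).intervalIntegrable _ _)
    (fun n θ => mul_nonneg (wallisCoeff_pos n).le (by positivity)) ?_ fun θ _ => ?_
  · simp_rw [hterm]
    refine Summable.of_nonneg_of_le (fun n => by positivity [wallisCoeff_pos n]) (fun n => ?_)
      ((summable_geometric_of_lt_one (by positivity) ht2).mul_left (π / 2))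
    gcongr
    exact mul_le_of_le_one_left (by positivity)
      (pow_le_one₀ (wallisCoeff_pos n).le (wallisCoeff_le_one n))
  · refine hasSum_wallisCoeff_mul_pow (abs_lt.2 ⟨by nlinarith [sq_nonneg (sin θ)], ?_⟩)
    nlinarith [sin_sq_le_one θ]

theorem arcsin_eq_integral {t : ℝ} (ht0 : 0 ≤ t) (ht1 : t < 1) :
    arcsin t = ∫ x in (0 : ℝ)..t, 1 / √(1 - x ^ 2) := by
  have hderiv : ∀ x ∈ Set.uIcc 0 t, HasDerivAt arcsin (1 / √(1 - x ^ 2)) x := by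
    intro x hx
    rw [Set.uIcc_of_le ht0] at hx
    exact hasDerivAt_arcsin (by linarith [hx.1]) (by linarith [hx.2])
  have hcont : ContinuousOn (fun x : ℝ => 1 / √(1 - x ^ 2)) (Set.uIcc 0 t) := by
    refine continuousOn_const.div (by fun_prop) fun x hx => ?_
    rw [Set.uIcc_of_le ht0] at hx
    exact (sqrt_pos.2 (by nlinarith [hx.1, hx.2])).ne'
  rw [intervalIntegral.integral_eq_sub_of_hasDerivAt hderiv hcont.intervalIntegrable,
    arcsin_zero, sub_zero]

theorem hasSum_arcsin {t : ℝ} (ht0 : 0 ≤ t) (ht1 : t < 1) :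
    HasSum (fun n => wallisCoeff n * t ^ (2 * n + 1) / (2 * n + 1)) (arcsin t) := by
  have ht2 : t ^ 2 < 1 := by nlinarith
  have hterm (n : ℕ) : ∫ x in (0 : ℝ)..t, wallisCoeff n * (x ^ 2) ^ n
      = wallisCoeff n * t ^ (2 * n + 1) / (2 * n + 1) := by
    simp_rw [← pow_mul]
    rw [intervalIntegral.integral_const_mul, integral_pow, zero_pow (by omega), sub_zero]
    push_cast
    ring
  simp_rw [← hterm]
  rw [arcsin_eq_integral ht0 ht1]
  refine hasSum_intervalIntegral_of_nonneg ht0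
    (fun n => (by fun_prop : Continuous _).intervalIntegrable _ _)
    (fun n x => mul_nonneg (wallisCoeff_pos n).le (by positivity)) ?_ fun x hx => ?_
  · simp_rw [hterm]
    refine Summable.of_nonneg_of_le (fun n => by positivity [wallisCoeff_pos n]) (fun n => ?_)
      ((summable_geometric_of_lt_one (by positivity) ht2).mul_left t)
    rw [div_le_iff₀ (by positivity), pow_succ, pow_mul]
    have := wallisCoeff_le_one n
    calc wallisCoeff n * ((t ^ 2) ^ n * t) ≤ 1 * ((t ^ 2) ^ n * t) := by gcongr
      _ = t * (t ^ 2) ^ n * 1 := by ring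
      _ ≤ t * (t ^ 2) ^ n * (2 * n + 1) := by gcongr; linarith [n.cast_nonneg (α := ℝ)]
  · exact hasSum_wallisCoeff_mul_pow (abs_lt.2 ⟨by nlinarith, by nlinarith [hx.1, hx.2]⟩)

theorem hasSum_arcsin_div_self {t : ℝ} (ht0 : 0 < t) (ht1 : t < 1) :
    HasSum (fun n => wallisCoeff n / (2 * n + 1) * (t ^ 2) ^ n) (arcsin t / t) := by
  refine ((hasSum_arcsin ht0.le ht1).div_const t).congr_fun fun n => ?_
  rw [pow_succ t (2 * n), pow_mul]
  field_simp

theorem hasSum_log_div {t : ℝ} (ht0 : t ≠ 0) (ht1 : |t| < 1) :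
    HasSum (fun n : ℕ => 1 / (2 * n + 1) * (t ^ 2) ^ n) (log ((1 + t) / (1 - t)) / (2 * t)) := by
  obtain ⟨hlt, hgt⟩ := abs_lt.1 ht1
  rw [log_div (by linarith) (by linarith)]
  refine ((hasSum_log_sub_log_of_abs_lt_one ht1).div_const (2 * t)).congr_fun fun n => ?_
  rw [pow_succ t (2 * n), pow_mul]
  field_simp

theorem stmt_19 (t : ℝ) (ht0 : 0 < t) (ht1 : t < 1) :
    (π * Real.arcsin t) / (2 * t)
      < (∫ θ in (0:ℝ)..(π / 2), 1 / Real.sqrt (1 - t ^ 2 * Real.sin θ ^ 2)) ∧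
    (∫ θ in (0:ℝ)..(π / 2), 1 / Real.sqrt (1 - t ^ 2 * Real.sin θ ^ 2))
      < (π / (4 * t)) * Real.log ((1 + t) / (1 - t)) := by
  have habs : |t| < 1 := abs_lt.2 ⟨by linarith, ht1⟩
  have hK := hasSum_ellipticK habs
  constructor
  · rw [show π * arcsin t / (2 * t) = π / 2 * (arcsin t / t) by ring]
    refine hasSum_lt (i := 1) (fun n => ?_) ?_
      ((hasSum_arcsin_div_self ht0 ht1).mul_left (π / 2)) hK
    · gcongr
      exact wallisCoeff_div_le_sq n
    · rw [wallisCoeff_one]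
      gcongr
      norm_num
  · rw [show π / (4 * t) * log ((1 + t) / (1 - t)) = π / 2 * (log ((1 + t) / (1 - t)) / (2 * t))
      by field_simp; ring]
    refine hasSum_lt (i := 1) (fun n => ?_) ?_ hK
      ((hasSum_log_div ht0.ne' habs).mul_left (π / 2))
    · gcongr
      exact wallisCoeff_sq_le n
    · rw [wallisCoeff_one]
      gcongr
      norm_num
end
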